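/- arXiv:2211.04000 — 10 statements merged into one kernel-verified Lean document; each statement's English description precedes it below -/
import Mathlib

section
/- If a ground conjunctive formula F = (∧_{p∈P} 0 ≤ p) ∧ (∧_{q∈Q} ¬(0 ≤ q)) ∧ (∧_{r∈R} ¬(0 = r)) is satisfiable modulo the theory LRR, and C is the least regular cone containing P, then C is consistent and the structure M(C) built from C satisfies F; conversely if C is consistent and M(C) ⊨ F then F is satisfiable modulo LRR. -/
open MvPolynomial

def IsCone {σ : Type} (C : Set (MvPolynomial σ ℚ)) : Prop :=
  (0 : MvPolynomial σ ℚ) ∈ C ∧ (∀ x ∈ C, ∀ y ∈ C, x + y ∈ C) ∧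
    ∀ (a : ℚ), 0 ≤ a → ∀ x ∈ C, a • x ∈ C

def unitsOf {σ : Type} (C : Set (MvPolynomial σ ℚ)) : Set (MvPolynomial σ ℚ) :=
  C ∩ (-C)

def IsRegularCone {σ : Type} (C : Set (MvPolynomial σ ℚ)) : Prop :=
  IsCone C ∧ (1 : MvPolynomial σ ℚ) ∈ C ∧
    ∃ I : Ideal (MvPolynomial σ ℚ), (I : Set (MvPolynomial σ ℚ)) = unitsOf C

/-- A model of the theory `LRR` over constant symbols `σ`: a commutative ring that is a
`ℚ`-algebra (equivalently, a divisible commutative ring), with a partial order that is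
reflexive, transitive, antisymmetric, compatible with addition, unperforated, and
satisfies `0 ≤ 1 ∧ 0 ≠ 1`, together with an interpretation of the constants `σ`. -/
structure LRRModel (σ : Type) where
  Carrier : Type
  [ring : CommRing Carrier]
  [alg : Algebra ℚ Carrier]
  le : Carrier → Carrier → Prop
  le_refl : ∀ x, le x x
  le_trans : ∀ x y z, le x y → le y z → le x z
  le_antisymm : ∀ x y, le x y → le y x → x = y
  le_add : ∀ x y z, le x y → le (x + z) (y + z)
  le_zero_one : le 0 1
  zero_ne_one : (0 : Carrier) ≠ 1
  unperforated : ∀ (n : ℕ) (x : Carrier), 1 ≤ n → le 0 (n • x) → le 0 x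
  val : σ → Carrier

attribute [instance] LRRModel.ring LRRModel.alg

/-- Interpretation of a polynomial term in an `LRR`-model. -/
noncomputable def LRRModel.evalp {σ : Type} (M : LRRModel σ) (p : MvPolynomial σ ℚ) : M.Carrier :=
  MvPolynomial.aeval M.val p

/-- Satisfaction of the ground conjunctive formula
`(∧_{p∈P} 0 ≤ p) ∧ (∧_{q∈Q} ¬(0 ≤ q)) ∧ (∧_{r∈R} ¬(0 = r))` in an `LRR`-model. -/
def LRRModel.satConj {σ : Type} (M : LRRModel σ) (P Q R : Set (MvPolynomial σ ℚ)) : Prop :=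
  (∀ p ∈ P, M.le 0 (M.evalp p)) ∧ (∀ q ∈ Q, ¬ M.le 0 (M.evalp q)) ∧
    (∀ r ∈ R, M.evalp r ≠ 0)

/-- The order of the structure `M(C)` on the quotient ring `ℚ[X]/I` (`I` the ideal of
additive units of `C`): `a ≤ b` iff `a = p + I`, `b = q + I` with `q − p ∈ C`. -/
def quotLe {σ : Type} (C : Set (MvPolynomial σ ℚ)) (I : Ideal (MvPolynomial σ ℚ))
    (a b : MvPolynomial σ ℚ ⧸ I) : Prop :=
  ∃ p q : MvPolynomial σ ℚ,
    Ideal.Quotient.mk I p = a ∧ Ideal.Quotient.mk I q = b ∧ q - p ∈ C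

/-- Satisfaction of the conjunctive formula in the structure `M(C)` (each variable `x`
is interpreted as `x + I`, so a polynomial `p` is interpreted as `p + I`). -/
def MCsat {σ : Type} (C : Set (MvPolynomial σ ℚ)) (I : Ideal (MvPolynomial σ ℚ))
    (P Q R : Set (MvPolynomial σ ℚ)) : Prop :=
  (∀ p ∈ P, quotLe C I 0 (Ideal.Quotient.mk I p)) ∧
  (∀ q ∈ Q, ¬ quotLe C I 0 (Ideal.Quotient.mk I q)) ∧
  (∀ r ∈ R, (Ideal.Quotient.mk I r : MvPolynomial σ ℚ ⧸ I) ≠ 0)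

/-! ### Auxiliary lemmas -/

lemma aeval_mk_X {σ : Type} (I : Ideal (MvPolynomial σ ℚ)) (p : MvPolynomial σ ℚ) :
    MvPolynomial.aeval (fun i => Ideal.Quotient.mk I (MvPolynomial.X i)) p
      = Ideal.Quotient.mk I p := by
  have h : (MvPolynomial.aeval (fun i => Ideal.Quotient.mk I (MvPolynomial.X i)) :
      MvPolynomial σ ℚ →ₐ[ℚ] MvPolynomial σ ℚ ⧸ I) = Ideal.Quotient.mkₐ ℚ I :=
    MvPolynomial.algHom_ext (fun i => by simp)
  rw [h, Ideal.Quotient.mkₐ_eq_mk]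

lemma LRRModel.le_neg {σ : Type} (M : LRRModel σ) {x : M.Carrier} (h : M.le 0 (-x)) :
    M.le x 0 := by
  have := M.le_add 0 (-x) x h
  simpa using this

lemma LRRModel.le_nsmul {σ : Type} (M : LRRModel σ) {x : M.Carrier} (h : M.le 0 x) (n : ℕ) :
    M.le 0 (n • x) := by
  induction n with
  | zero => simpa using M.le_refl 0
  | succ n ih =>
    have h2 : M.le (n • x) (n • x + x) := by
      have := M.le_add 0 x (n • x) h
      simpa [add_comm] using this
    rw [succ_nsmul]
    exact M.le_trans _ _ _ ih h2

lemma LRRModel.le_qsmul {σ : Type} (M : LRRModel σ) {x : M.Carrier} (h : M.le 0 x)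
    {a : ℚ} (ha : 0 ≤ a) : M.le 0 (a • x) := by
  have hden : a.den • (a • x) = a.num.toNat • x := by
    rw [← Nat.cast_smul_eq_nsmul ℚ a.den (a • x), ← Nat.cast_smul_eq_nsmul ℚ a.num.toNat x,
      smul_smul]
    congr 1
    have hd : (a.den : ℚ) ≠ 0 := by exact_mod_cast a.den_nz
    have h1 : (a.den : ℚ) * a = (a.num : ℚ) := by
      rw [mul_comm]
      exact (eq_div_iff hd).mp (Rat.num_div_den a).symm
    rw [h1]
    exact_mod_cast congrArg (fun z : ℤ => (z : ℚ)) (Int.toNat_of_nonneg (Rat.num_nonneg.mpr ha)).symm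
  have := M.le_nsmul h a.num.toNat
  rw [← hden] at this
  exact M.unperforated a.den (a • x) a.pos this

lemma mem_C_of_mem_I {σ : Type} {C : Set (MvPolynomial σ ℚ)} {I : Ideal (MvPolynomial σ ℚ)}
    (hI : (I : Set (MvPolynomial σ ℚ)) = unitsOf C) {r : MvPolynomial σ ℚ} (hr : r ∈ I) :
    r ∈ C := by
  have : r ∈ unitsOf C := hI ▸ hr
  exact this.1

lemma quotLe_mk {σ : Type} {C : Set (MvPolynomial σ ℚ)} {I : Ideal (MvPolynomial σ ℚ)}
    (hI : (I : Set (MvPolynomial σ ℚ)) = unitsOf C) (hcone : IsCone C)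
    {p q : MvPolynomial σ ℚ} :
    quotLe C I (Ideal.Quotient.mk I p) (Ideal.Quotient.mk I q) ↔ q - p ∈ C := by
  constructor
  · rintro ⟨p', q', hp, hq, hmem⟩
    have h1 : p' - p ∈ I := (Ideal.Quotient.eq).mp hp
    have h2 : q - q' ∈ I := by
      have := I.neg_mem ((Ideal.Quotient.eq).mp hq)
      rwa [neg_sub] at this
    have : (q - q') + ((q' - p') + (p' - p)) ∈ C :=
      hcone.2.1 _ (mem_C_of_mem_I hI h2) _
        (hcone.2.1 _ hmem _ (mem_C_of_mem_I hI h1))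
    have e : (q - q') + ((q' - p') + (p' - p)) = q - p := by ring
    rwa [e] at this
  · intro h
    exact ⟨p, q, rfl, rfl, h⟩

/-- The structure `M(C)` as an `LRR`-model, for a consistent regular cone `C` with
units ideal `I`. -/
noncomputable def MCmodel {σ : Type} (C : Set (MvPolynomial σ ℚ)) (I : Ideal (MvPolynomial σ ℚ))
    (hI : (I : Set (MvPolynomial σ ℚ)) = unitsOf C) (hreg : IsRegularCone C)
    (hne : C ≠ Set.univ) : LRRModel σ where
  Carrier := MvPolynomial σ ℚ ⧸ I
  le := quotLe C I
  le_refl x := by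
    obtain ⟨p, rfl⟩ := Ideal.Quotient.mk_surjective x
    exact (quotLe_mk hI hreg.1).mpr (by simpa using hreg.1.1)
  le_trans x y z hxy hyz := by
    obtain ⟨p, rfl⟩ := Ideal.Quotient.mk_surjective x
    obtain ⟨q, rfl⟩ := Ideal.Quotient.mk_surjective y
    obtain ⟨r, rfl⟩ := Ideal.Quotient.mk_surjective z
    rw [quotLe_mk hI hreg.1] at hxy hyz ⊢
    have : (r - q) + (q - p) ∈ C := hreg.1.2.1 _ hyz _ hxy
    have e : (r - q) + (q - p) = r - p := by ring
    rwa [e] at this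
  le_antisymm x y hxy hyx := by
    obtain ⟨p, rfl⟩ := Ideal.Quotient.mk_surjective x
    obtain ⟨q, rfl⟩ := Ideal.Quotient.mk_surjective y
    rw [quotLe_mk hI hreg.1] at hxy hyx
    have hu : q - p ∈ unitsOf C := ⟨hxy, by rw [Set.mem_neg, neg_sub]; exact hyx⟩
    have hmem : q - p ∈ I := by rw [← SetLike.mem_coe, hI]; exact hu
    apply (Ideal.Quotient.eq).mpr
    have := I.neg_mem hmem
    rwa [neg_sub] at this
  le_add x y z h := by
    obtain ⟨p, rfl⟩ := Ideal.Quotient.mk_surjective x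
    obtain ⟨q, rfl⟩ := Ideal.Quotient.mk_surjective y
    obtain ⟨r, rfl⟩ := Ideal.Quotient.mk_surjective z
    rw [quotLe_mk hI hreg.1] at h
    rw [← map_add, ← map_add, quotLe_mk hI hreg.1]
    have e : (q + r) - (p + r) = q - p := by ring
    rwa [e]
  le_zero_one := by
    refine ⟨0, 1, map_zero _, map_one (Ideal.Quotient.mk I), ?_⟩
    rw [sub_zero]
    exact hreg.2.1
  zero_ne_one h := by
    have h0 : (Ideal.Quotient.mk I 0 : MvPolynomial σ ℚ ⧸ I) = Ideal.Quotient.mk I 1 := by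
      rw [map_zero, map_one]; exact h
    have h1 : (0 : MvPolynomial σ ℚ) - 1 ∈ I := (Ideal.Quotient.eq).mp h0
    have h2 : (1 : MvPolynomial σ ℚ) ∈ I := by
      have := I.neg_mem h1
      simpa using this
    have hT : I = ⊤ := (Ideal.eq_top_iff_one I).mpr h2
    apply hne
    ext p
    simp only [Set.mem_univ, iff_true]
    have : p ∈ I := hT ▸ Submodule.mem_top
    exact mem_C_of_mem_I hI this
  unperforated n x hn hx := by
    obtain ⟨p, rfl⟩ := Ideal.Quotient.mk_surjective x
    have hnx : (n • Ideal.Quotient.mk I p : MvPolynomial σ ℚ ⧸ I)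
        = Ideal.Quotient.mk I (n • p) := (map_nsmul (Ideal.Quotient.mk I) n p).symm
    rw [hnx, show (0 : MvPolynomial σ ℚ ⧸ I) = Ideal.Quotient.mk I 0 from (map_zero _).symm,
      quotLe_mk hI hreg.1] at hx
    have hmem : n • p ∈ C := by simpa using hx
    have hq : ((n : ℚ)⁻¹) • ((n : ℚ) • p) ∈ C := by
      apply hreg.1.2.2 _ (by positivity) _
      rwa [Nat.cast_smul_eq_nsmul]
    have hn0 : (n : ℚ) ≠ 0 := by positivity
    rw [smul_smul, inv_mul_cancel₀ hn0, one_smul] at hq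
    exact ⟨0, p, map_zero _, rfl, by simpa using hq⟩
  val i := Ideal.Quotient.mk I (MvPolynomial.X i)

lemma LRRModel.evalp_zero {σ : Type} (M : LRRModel σ) : M.evalp 0 = 0 := map_zero _

lemma LRRModel.evalp_one {σ : Type} (M : LRRModel σ) : M.evalp 1 = 1 :=
  map_one (MvPolynomial.aeval M.val)

lemma LRRModel.evalp_add {σ : Type} (M : LRRModel σ) (p q : MvPolynomial σ ℚ) :
    M.evalp (p + q) = M.evalp p + M.evalp q := map_add _ _ _

lemma LRRModel.evalp_neg {σ : Type} (M : LRRModel σ) (p : MvPolynomial σ ℚ) :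
    M.evalp (-p) = -(M.evalp p) := map_neg _ _

lemma LRRModel.evalp_smul {σ : Type} (M : LRRModel σ) (a : ℚ) (p : MvPolynomial σ ℚ) :
    M.evalp (a • p) = a • M.evalp p := map_smul (MvPolynomial.aeval M.val) _ _

lemma MCmodel_evalp {σ : Type} (C : Set (MvPolynomial σ ℚ)) (I : Ideal (MvPolynomial σ ℚ))
    (hI : (I : Set (MvPolynomial σ ℚ)) = unitsOf C) (hreg : IsRegularCone C)
    (hne : C ≠ Set.univ) (p : MvPolynomial σ ℚ) :
    (MCmodel C I hI hreg hne).evalp p = Ideal.Quotient.mk I p :=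
  aeval_mk_X I p

/-- for a ground conjunctive formula
`F = (∧_{p∈P} 0 ≤ p) ∧ (∧_{q∈Q} ¬(0 ≤ q)) ∧ (∧_{r∈R} ¬(0 = r))`, with `C` the least
regular cone containing `P` (whose units form the ideal `I`): `F` is satisfiable modulo
`LRR` if and only if `C` is consistent and the structure `M(C)` satisfies `F`. -/
theorem sat_iff_min_model_sat {σ : Type} [Fintype σ]
    (P Q R : Set (MvPolynomial σ ℚ)) (hP : P.Finite) (hQ : Q.Finite) (hR : R.Finite)
    (C : Set (MvPolynomial σ ℚ))
    (hC : IsRegularCone C ∧ P ⊆ C ∧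
      ∀ C', IsRegularCone C' → P ⊆ C' → C ⊆ C')
    (I : Ideal (MvPolynomial σ ℚ)) (hI : (I : Set (MvPolynomial σ ℚ)) = unitsOf C) :
    (∃ M : LRRModel σ, M.satConj P Q R) ↔
      (C ≠ (Set.univ : Set (MvPolynomial σ ℚ)) ∧ MCsat C I P Q R) := by
  obtain ⟨hreg, hPC, hmin⟩ := hC
  constructor
  · rintro ⟨M, hMP, hMQ, hMR⟩
    set Cn : Set (MvPolynomial σ ℚ) := {p | M.le 0 (M.evalp p)} with hCn
    have hmemCn : ∀ p : MvPolynomial σ ℚ, p ∈ Cn ↔ M.le 0 (M.evalp p) := fun p => Iff.rfl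
    have hconeCn : IsCone Cn := by
      refine ⟨?_, ?_, ?_⟩
      · rw [hmemCn, M.evalp_zero]; exact M.le_refl 0
      · intro x hx y hy
        rw [hmemCn] at hx hy ⊢
        rw [M.evalp_add]
        have h1 : M.le (M.evalp y) (M.evalp x + M.evalp y) := by
          have := M.le_add 0 (M.evalp x) (M.evalp y) hx
          simpa using this
        exact M.le_trans _ _ _ hy h1
      · intro a ha x hx
        rw [hmemCn] at hx ⊢
        rw [M.evalp_smul]
        exact M.le_qsmul hx ha
    have hunitCn : ∀ p : MvPolynomial σ ℚ, p ∈ unitsOf Cn ↔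
        MvPolynomial.aeval M.val p = 0 := by
      intro p
      constructor
      · rintro ⟨h1, h2⟩
        rw [Set.mem_neg, hmemCn, M.evalp_neg] at h2
        rw [hmemCn] at h1
        exact (M.le_antisymm _ _ h1 (M.le_neg h2)).symm
      · intro h
        have he : M.evalp p = 0 := h
        constructor
        · rw [hmemCn, he]; exact M.le_refl 0
        · rw [Set.mem_neg, hmemCn, M.evalp_neg, he, neg_zero]; exact M.le_refl 0
    have hregCn : IsRegularCone Cn := by
      refine ⟨hconeCn, ?_, ⟨RingHom.ker (MvPolynomial.aeval M.val :
        MvPolynomial σ ℚ →ₐ[ℚ] M.Carrier), ?_⟩⟩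
      · rw [hmemCn, M.evalp_one]; exact M.le_zero_one
      · ext p
        rw [SetLike.mem_coe, RingHom.mem_ker, hunitCn]
    have hsub : C ⊆ Cn := hmin Cn hregCn (fun p hp => hMP p hp)
    have hneC : C ≠ Set.univ := by
      intro h
      have hm : (-1 : MvPolynomial σ ℚ) ∈ Cn := hsub (h ▸ Set.mem_univ _)
      rw [hmemCn, M.evalp_neg, M.evalp_one] at hm
      exact M.zero_ne_one (M.le_antisymm _ _ M.le_zero_one (M.le_neg hm))
    refine ⟨hneC, ?_, ?_, ?_⟩
    · intro p hp
      exact ⟨0, p, map_zero _, rfl, by rw [sub_zero]; exact hPC hp⟩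
    · intro q hq hle
      have h0 : quotLe C I (Ideal.Quotient.mk I 0) (Ideal.Quotient.mk I q) := by
        rwa [map_zero]
      have hqC : q ∈ C := by
        have := (quotLe_mk hI hreg.1).mp h0
        rwa [sub_zero] at this
      exact hMQ q hq (hsub hqC)
    · intro r hr h0r
      have hrI : r ∈ I := (Ideal.Quotient.eq_zero_iff_mem).mp h0r
      have hru : r ∈ unitsOf C := hI ▸ hrI
      have hruCn : r ∈ unitsOf Cn :=
        ⟨hsub hru.1, Set.mem_neg.mpr (hsub (Set.mem_neg.mp hru.2))⟩
      exact hMR r hr ((hunitCn r).mp hruCn)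
  · rintro ⟨hne, hsP, hsQ, hsR⟩
    refine ⟨MCmodel C I hI hreg hne, ?_, ?_, ?_⟩
    · intro p hp
      have h := hsP p hp
      show quotLe C I 0 ((MCmodel C I hI hreg hne).evalp p)
      rwa [MCmodel_evalp]
    · intro q hq hle
      apply hsQ q hq
      have hle' : quotLe C I 0 ((MCmodel C I hI hreg hne).evalp q) := hle
      rwa [MCmodel_evalp] at hle'
    · intro r hr h
      apply hsR r hr
      have h' : (MCmodel C I hI hreg hne).evalp r = 0 := h
      rwa [MCmodel_evalp] at h'
end

section
/- If a ground conjunctive formula F (a conjunction of atoms 0 ≤ p for p ∈ P, with negated inequality and disequality atoms) is satisfiable modulo LRR, then the least regular cone containing P equals exactly the set of polynomials q such that F entails 0 ≤ q modulo LRR. -/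
open MvPolynomial

namespace LRRModel

variable {σ : Type} (M : LRRModel σ)

lemma le_of_le_sub {x y : M.Carrier} (h : M.le 0 (y - x)) : M.le x y := by
  have := M.le_add 0 (y - x) x h
  rwa [zero_add, sub_add_cancel] at this

lemma sub_le_of_le {x y : M.Carrier} (h : M.le x y) : M.le 0 (y - x) := by
  have := M.le_add x y (-x) h
  rwa [add_neg_cancel, ← sub_eq_add_neg] at this

lemma le_nsmul_s7 {x : M.Carrier} (hx : M.le 0 x) (n : ℕ) : M.le 0 (n • x) := by
  induction n with
  | zero => simpa using M.le_refl 0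
  | succ n ih =>
      rw [succ_nsmul]
      have h1 : M.le x (n • x + x) := by
        have := M.le_add 0 (n • x) x ih
        rwa [zero_add] at this
      exact M.le_trans _ _ _ hx h1

lemma le_qsmul_s7 {x : M.Carrier} {a : ℚ} (ha : 0 ≤ a) (hx : M.le 0 x) :
    M.le 0 (a • x) := by
  have hden : 1 ≤ a.den := a.pos
  have key : a.den • (a • x) = a.num.toNat • x := by
    rw [← Nat.cast_smul_eq_nsmul ℚ, ← Nat.cast_smul_eq_nsmul ℚ, smul_smul]
    congr 1
    have : ((a.num.toNat : ℤ) : ℚ) = (a.num : ℚ) := by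
      rw [Int.toNat_of_nonneg (Rat.num_nonneg.mpr ha)]
    rw [show ((a.num.toNat : ℚ)) = ((a.num.toNat : ℤ) : ℚ) by push_cast; ring, this,
      mul_comm]
    exact_mod_cast Rat.mul_den_eq_num a
  exact M.unperforated a.den (a • x) hden (by rw [key]; exact M.le_nsmul_s7 hx _)

/-- The positive cone of a model. -/
def modelCone : Set (MvPolynomial σ ℚ) := {p | M.le 0 (M.evalp p)}

lemma evalp_add_s7 (p q : MvPolynomial σ ℚ) : M.evalp (p + q) = M.evalp p + M.evalp q :=
  map_add _ _ _

lemma isRegularCone_modelCone : IsRegularCone M.modelCone := by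
  refine ⟨⟨?_, ?_, ?_⟩, ?_, ?_⟩
  · show M.le 0 (M.evalp 0); rw [show M.evalp 0 = 0 from map_zero _]; exact M.le_refl 0
  · intro x hx y hy
    show M.le 0 (M.evalp (x + y))
    rw [M.evalp_add_s7]
    have h1 : M.le (M.evalp y) (M.evalp x + M.evalp y) := by
      have := M.le_add 0 (M.evalp x) (M.evalp y) hx
      rwa [zero_add] at this
    exact M.le_trans _ _ _ hy h1
  · intro a ha x hx
    show M.le 0 (M.evalp (a • x))
    rw [show M.evalp (a • x) = a • M.evalp x from map_smul (aeval M.val) a x]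
    exact M.le_qsmul_s7 ha hx
  · show M.le 0 (M.evalp 1); rw [show M.evalp 1 = 1 from map_one _]; exact M.le_zero_one
  · refine ⟨RingHom.ker (aeval M.val : MvPolynomial σ ℚ →ₐ[ℚ] M.Carrier), ?_⟩
    ext x
    simp only [SetLike.mem_coe, RingHom.mem_ker, unitsOf, Set.mem_inter_iff, Set.mem_neg]
    constructor
    · intro h
      constructor
      · show M.le 0 (M.evalp x); rw [show M.evalp x = 0 from h]; exact M.le_refl 0
      · show M.le 0 (M.evalp (-x))
        rw [show M.evalp (-x) = -M.evalp x from map_neg _ _, show M.evalp x = 0 from h,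
          neg_zero]
        exact M.le_refl 0
    · rintro ⟨h1, h2⟩
      have h2' : M.le 0 (-(M.evalp x)) := by
        have : M.evalp (-x) = -M.evalp x := map_neg _ _
        rw [← this]; exact h2
      have : M.le (M.evalp x) 0 := by
        have := M.le_add 0 (-(M.evalp x)) (M.evalp x) h2'
        rwa [zero_add, neg_add_cancel] at this
      exact M.le_antisymm _ _ this h1

end LRRModel

section QuotModel

variable {σ : Type} (C : Set (MvPolynomial σ ℚ)) (hcone : IsCone C)
  (hone : (1 : MvPolynomial σ ℚ) ∈ C) (I : Ideal (MvPolynomial σ ℚ))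
  (hI : (I : Set (MvPolynomial σ ℚ)) = unitsOf C) (hproper : (1 : MvPolynomial σ ℚ) ∉ I)

/-- Elements of `I` lie in `C`. -/
lemma mem_C_of_mem_I_s7 (hI' : (I : Set (MvPolynomial σ ℚ)) = unitsOf C)
    {x : MvPolynomial σ ℚ} (hx : x ∈ I) : x ∈ C := by
  have : x ∈ (I : Set (MvPolynomial σ ℚ)) := hx
  rw [hI'] at this
  exact this.1

/-- The quotient model associated to a regular cone `C`. -/
noncomputable def quotModel : LRRModel σ where
  Carrier := MvPolynomial σ ℚ ⧸ I
  le x y := ∃ c ∈ C, y - x = Ideal.Quotient.mk I c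
  le_refl x := ⟨0, hcone.1, by simp⟩
  le_trans x y z := by
    rintro ⟨c, hc, hc'⟩ ⟨d, hd, hd'⟩
    exact ⟨c + d, hcone.2.1 c hc d hd, by rw [map_add, ← hc', ← hd']; ring⟩
  le_antisymm x y := by
    rintro ⟨c, hc, hc'⟩ ⟨d, hd, hd'⟩
    have hsum : Ideal.Quotient.mk I (c + d) = 0 := by
      rw [map_add, ← hc', ← hd']; ring
    have hcd : c + d ∈ I := Ideal.Quotient.eq_zero_iff_mem.mp hsum
    have hcd' : -(c + d) ∈ C := by
      have : c + d ∈ (I : Set (MvPolynomial σ ℚ)) := hcd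
      rw [hI] at this
      exact this.2
    have hdC : -d ∈ C := by
      have := hcone.2.1 c hc _ hcd'
      have h2 : c + -(c + d) = -d := by ring
      rwa [h2] at this
    have hdI : d ∈ I := by
      have : d ∈ unitsOf C := ⟨hd, hdC⟩
      rw [← hI] at this
      exact this
    have : Ideal.Quotient.mk I d = 0 := Ideal.Quotient.eq_zero_iff_mem.mpr hdI
    have hxy : x - y = 0 := by rw [hd', this]
    linear_combination hxy
  le_add x y z := by
    rintro ⟨c, hc, hc'⟩
    exact ⟨c, hc, by rw [← hc']; ring⟩
  le_zero_one := ⟨1, hone, by simp⟩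
  zero_ne_one := by
    intro h
    apply hproper
    apply Ideal.Quotient.eq_zero_iff_mem.mp
    rw [map_one, ← h]
  unperforated n x hn := by
    rintro ⟨c, hc, hc'⟩
    obtain ⟨x₀, hx₀⟩ := Ideal.Quotient.mk_surjective (I := I) x
    have hmk : Ideal.Quotient.mk I (n • x₀ - c) = 0 := by
      rw [map_sub, map_nsmul, hx₀, ← hc']; ring
    have hmem : n • x₀ - c ∈ I := Ideal.Quotient.eq_zero_iff_mem.mp hmk
    have h1 : n • x₀ - c ∈ C := mem_C_of_mem_I_s7 C I hI hmem
    have h2 : n • x₀ ∈ C := by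
      have := hcone.2.1 c hc _ h1
      rwa [add_sub_cancel] at this
    have h3 : x₀ ∈ C := by
      have hn0 : (n : ℚ) ≠ 0 := by positivity
      have := hcone.2.2 (1 / (n : ℚ)) (by positivity) _ h2
      rwa [← Nat.cast_smul_eq_nsmul ℚ, smul_smul, one_div, inv_mul_cancel₀ hn0,
        one_smul] at this
    exact ⟨x₀, h3, by rw [hx₀]; ring⟩
  val i := Ideal.Quotient.mk I (X i)

lemma quotModel_evalp (p : MvPolynomial σ ℚ) :
    (quotModel C hcone hone I hI hproper).evalp p = Ideal.Quotient.mk I p := by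
  show (aeval fun i => Ideal.Quotient.mk I (X i)) p = _
  have : (aeval fun i => Ideal.Quotient.mk I (X i)) p
      = (Ideal.Quotient.mkₐ ℚ I) (aeval X p) := by
    rw [comp_aeval_apply]
    rfl
  rw [this, aeval_X_left_apply]
  rfl

lemma quotModel_le_iff (p : MvPolynomial σ ℚ) :
    (quotModel C hcone hone I hI hproper).le 0
      ((quotModel C hcone hone I hI hproper).evalp p) ↔ p ∈ C := by
  rw [quotModel_evalp]
  constructor
  · rintro ⟨c, hc, hc'⟩
    have hmk : Ideal.Quotient.mk I (p - c) = 0 := by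
      rw [map_sub, ← hc']; exact sub_sub_self _ _
    have hmem : p - c ∈ I := Ideal.Quotient.eq_zero_iff_mem.mp hmk
    have h1 : p - c ∈ C := mem_C_of_mem_I_s7 C I hI hmem
    have := hcone.2.1 c hc _ h1
    rwa [add_sub_cancel] at this
  · intro hp
    exact ⟨p, hp, by exact sub_zero _⟩

end QuotModel

/-- if the ground conjunctive formula
`F = (∧_{p∈P} 0 ≤ p) ∧ (∧_{q∈Q} ¬(0 ≤ q)) ∧ (∧_{r∈R} ¬(0 = r))` is satisfiable modulo
`LRR`, then the least regular cone containing `P` equals the consequence cone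
`Cn(F) = {q : F ⊨_LRR 0 ≤ q}`. -/
theorem least_regular_cone_is_consequence_cone {σ : Type} [Fintype σ]
    (P Q R : Set (MvPolynomial σ ℚ)) (hP : P.Finite) (hQ : Q.Finite) (hR : R.Finite)
    (C : Set (MvPolynomial σ ℚ))
    (hC : IsRegularCone C ∧ P ⊆ C ∧ ∀ C', IsRegularCone C' → P ⊆ C' → C ⊆ C')
    (hsat : ∃ M : LRRModel σ, M.satConj P Q R) :
    C = {q : MvPolynomial σ ℚ |
          ∀ M : LRRModel σ, M.satConj P Q R → M.le 0 (M.evalp q)} := by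
  obtain ⟨M, hM⟩ := hsat
  have hCM : C ⊆ M.modelCone :=
    hC.2.2 _ M.isRegularCone_modelCone (fun p hp => hM.1 p hp)
  obtain ⟨⟨hcone, hone, I, hI⟩, hPC, hmin⟩ := hC
  have hproper : (1 : MvPolynomial σ ℚ) ∉ I := by
    intro h1
    have h1' : (1 : MvPolynomial σ ℚ) ∈ unitsOf C := by rw [← hI]; exact h1
    have hneg : (-1 : MvPolynomial σ ℚ) ∈ C := h1'.2
    have hle' : M.le 0 (M.evalp (-1)) := hCM hneg
    have hle : M.le 0 (-(1 : M.Carrier)) := by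
      have he : M.evalp (-1 : MvPolynomial σ ℚ) = -1 := by
        show aeval M.val (-1 : MvPolynomial σ ℚ) = -1
        rw [map_neg, map_one]
      rwa [he] at hle'
    have h10 : M.le 1 0 := by
      have := M.le_add 0 (-1) 1 hle
      rwa [zero_add, neg_add_cancel] at this
    exact M.zero_ne_one (M.le_antisymm 0 1 M.le_zero_one h10)
  set M₀ := quotModel C hcone hone I hI hproper with hM₀
  have hle_iff : ∀ p : MvPolynomial σ ℚ, M₀.le 0 (M₀.evalp p) ↔ p ∈ C :=
    fun p => quotModel_le_iff C hcone hone I hI hproper p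
  have hsat₀ : M₀.satConj P Q R := by
    refine ⟨fun p hp => (hle_iff p).mpr (hPC hp), fun q hq hle => ?_, fun r hr h0 => ?_⟩
    · exact hM.2.1 q hq (hCM ((hle_iff q).mp hle))
    · have h0' : Ideal.Quotient.mk I r = 0 := by
        rw [← quotModel_evalp C hcone hone I hI hproper r]
        exact h0
      have hrI : r ∈ I := Ideal.Quotient.eq_zero_iff_mem.mp h0'
      have hru : r ∈ unitsOf C := by rw [← hI]; exact hrI
      have h1 : M.le 0 (M.evalp r) := hCM hru.1
      have h2 : M.le 0 (M.evalp (-r)) := hCM hru.2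
      have h2' : M.le 0 (-(M.evalp r)) := by
        have he : M.evalp (-r) = -(M.evalp r) := map_neg (aeval M.val) r
        rwa [he] at h2
      have h3 : M.le (M.evalp r) 0 := by
        have := M.le_add 0 (-(M.evalp r)) (M.evalp r) h2'
        rwa [zero_add, neg_add_cancel] at this
      exact hM.2.2 r hr (M.le_antisymm _ _ h3 h1)
  ext q
  simp only [Set.mem_setOf_eq]
  constructor
  · intro hq N hN
    exact hmin _ N.isRegularCone_modelCone (fun p hp => hN.1 p hp) hq
  · intro hq
    exact (hle_iff q).mp (hq M₀ hsat₀)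
end

section
/- A ground negation-free formula in the language of linear real arithmetic is satisfiable modulo LRA if and only if it is satisfiable modulo the weaker theory LRR. In particular, if a conjunction of linear inequalities A x ≤ b is LRA-unsatisfiable, then by Farkas' lemma there is a nonnegative integer vector y with yᵀA = 0 and yᵀb < 0, and the LRR axioms (compatibility, transitivity, unperforation, antisymmetry, nontriviality) suffice to derive a contradiction. -/
open MvPolynomial

/-- A ground affine (linear) term of `LRA` over constants `σ`:
`Σ cᵢ xᵢ + d` with rational coefficients. -/
structure AffTerm (σ : Type) where
  coeff : σ →₀ ℚ
  const : ℚ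

/-- Ground negation-free formulas in the language of `LRA`: atoms `t ≤ s` and `t = s`
over affine terms, closed under conjunction and disjunction. -/
inductive PosForm (σ : Type) where
  | le : AffTerm σ → AffTerm σ → PosForm σ
  | eq : AffTerm σ → AffTerm σ → PosForm σ
  | and : PosForm σ → PosForm σ → PosForm σ
  | or : PosForm σ → PosForm σ → PosForm σ

/-- Evaluation of an affine term in the standard model `ℝ`. -/
def AffTerm.evalR {σ : Type} (v : σ → ℝ) (t : AffTerm σ) : ℝ :=
  t.coeff.sum (fun x c => (c : ℝ) * v x) + (t.const : ℝ)

/-- Satisfaction of a negation-free `LRA` formula in `ℝ` (i.e. modulo `LRA`). -/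
def PosForm.satR {σ : Type} (v : σ → ℝ) : PosForm σ → Prop
  | .le t s => t.evalR v ≤ s.evalR v
  | .eq t s => t.evalR v = s.evalR v
  | .and F G => F.satR v ∧ G.satR v
  | .or F G => F.satR v ∨ G.satR v

/-- Evaluation of an affine term in an `LRR`-model. -/
def AffTerm.evalM {σ : Type} (M : LRRModel σ) (t : AffTerm σ) : M.Carrier :=
  t.coeff.sum (fun x c => c • M.val x) + algebraMap ℚ M.Carrier t.const

/-- Satisfaction of a negation-free formula in an `LRR`-model. -/
def PosForm.satM {σ : Type} (M : LRRModel σ) : PosForm σ → Prop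
  | .le t s => M.le (t.evalM M) (s.evalM M)
  | .eq t s => t.evalM M = s.evalM M
  | .and F G => F.satM M ∧ G.satM M
  | .or F G => F.satM M ∨ G.satM M



theorem farkasQ : ∀ (n : ℕ) {ι : Type} [Fintype ι] (A : ι → Fin n → ℚ) (b : ι → ℚ),
    (∃ x : Fin n → ℚ, ∀ i, ∑ j, A i j * x j ≤ b i) ∨
    (∃ y : ι → ℚ, (∀ i, 0 ≤ y i) ∧ (∀ j, ∑ i, y i * A i j = 0) ∧ ∑ i, y i * b i < 0) := by
  intro n
  induction n with
  | zero =>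
    intro ι _ A b
    by_cases h : ∀ i, 0 ≤ b i
    · exact Or.inl ⟨fun j => 0, fun i => by simpa using h i⟩
    · push_neg at h
      obtain ⟨i0, hi0⟩ := h
      classical
      refine Or.inr ⟨fun i => if i = i0 then 1 else 0, fun i => by dsimp only; split <;> norm_num, fun j => j.elim0, ?_⟩
      simp [hi0]
  | succ n IH =>
    intro ι _ A b
    classical
    set a : ι → ℚ := fun i => A i 0 with ha
    set ι' := ({i : ι // a i = 0} ⊕ ({p : ι // 0 < a p} × {q : ι // a q < 0})) with hι'
    set W : ι' → ι → ℚ := fun r => match r with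
      | .inl i0 => fun i => if i = i0.1 then 1 else 0
      | .inr pq => fun i => (if i = pq.1.1 then 1 / a pq.1.1 else 0) +
          (if i = pq.2.1 then -(1 / a pq.2.1) else 0) with hW
    have hWnn : ∀ r i, 0 ≤ W r i := by
      rintro (i0 | ⟨p, q⟩) i
      · dsimp only [W]; split <;> norm_num
      · dsimp only [W]
        have h1 : (0:ℚ) ≤ 1 / a p.1 := (div_pos one_pos p.2).le
        have h2 : (0:ℚ) ≤ -(1 / a q.1) := by
          rw [neg_nonneg]; exact (div_neg_of_pos_of_neg one_pos q.2).le
        apply add_nonneg <;> split <;> first | assumption | norm_num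
    have hWa : ∀ r, ∑ i, W r i * a i = 0 := by
      rintro (i0 | ⟨p, q⟩)
      · simpa [W] using i0.2
      · have hp := p.2; have hq := q.2
        dsimp [W]
        rw [Finset.sum_congr rfl (fun i _ => add_mul _ _ _), Finset.sum_add_distrib]
        simp [div_mul_cancel₀, ne_of_gt hp, ne_of_lt hq]
    set A' : ι' → Fin n → ℚ := fun r j => ∑ i, W r i * A i j.succ with hA'
    set b' : ι' → ℚ := fun r => ∑ i, W r i * b i with hb'
    have hWdotl : ∀ (i0 : {i : ι // a i = 0}) (c : ι → ℚ),
        ∑ i, W (Sum.inl i0) i * c i = c i0.1 := by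
      intro i0 c
      simp [W, ite_mul, Finset.sum_ite_eq' Finset.univ]
    have hWdotr : ∀ (p : {p : ι // 0 < a p}) (q : {q : ι // a q < 0}) (c : ι → ℚ),
        ∑ i, W (Sum.inr (p, q)) i * c i = c p.1 / a p.1 - c q.1 / a q.1 := by
      intro p q c
      dsimp only [W]
      rw [Finset.sum_congr rfl (fun i _ => add_mul _ _ _), Finset.sum_add_distrib]
      simp only [ite_mul, zero_mul, neg_mul, Finset.sum_ite_eq' Finset.univ, Finset.mem_univ,
        if_true]
      ring
    rcases IH A' b' with ⟨x', hx'⟩ | ⟨y', hy'nn, hy'A, hy'b⟩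
    · set g : ι → ℚ := fun i => ∑ j, A i j.succ * x' j with hg
      have swap2 : ∀ r : ι', ∑ j, A' r j * x' j = ∑ i, W r i * g i := by
        intro r
        dsimp only [A', g]
        simp only [Finset.sum_mul, Finset.mul_sum, mul_assoc]
        exact Finset.sum_comm
      have hx2 : ∀ r : ι', ∑ i, W r i * g i ≤ ∑ i, W r i * b i :=
        fun r => le_of_eq_of_le (swap2 r).symm (hx' r)
      have hZ : ∀ i, a i = 0 → g i ≤ b i := by
        intro i h
        exact le_of_eq_of_le (hWdotl ⟨i, h⟩ g).symm
          (le_of_le_of_eq (hx2 (Sum.inl ⟨i, h⟩)) (hWdotl ⟨i, h⟩ b))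
      set t : ι → ℚ := fun i => (b i - g i) / a i with ht
      have hPN : ∀ p q, 0 < a p → a q < 0 → t q ≤ t p := by
        intro p q hp hq
        have h1 : g p / a p - g q / a q ≤ b p / a p - b q / a q :=
          le_of_eq_of_le (hWdotr ⟨p, hp⟩ ⟨q, hq⟩ g).symm
            (le_of_le_of_eq (hx2 (Sum.inr (⟨p, hp⟩, ⟨q, hq⟩))) (hWdotr ⟨p, hp⟩ ⟨q, hq⟩ b))
        dsimp only [t]
        rw [sub_div, sub_div]
        linarith
      classical
      set P : Finset ι := Finset.univ.filter (fun i => 0 < a i) with hP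
      set N : Finset ι := Finset.univ.filter (fun i => a i < 0) with hN
      set x0 : ℚ := if hNe : N.Nonempty then N.sup' hNe t
        else if hPe : P.Nonempty then P.inf' hPe t else 0 with hx0
      have hx0P : ∀ p ∈ P, x0 ≤ t p := by
        intro p hp
        rw [hx0]
        split
        · exact Finset.sup'_le _ _ fun q hq =>
            hPN p q (by simpa [hP] using hp) (by simpa [hN] using hq)
        · rw [dif_pos ⟨p, hp⟩]
          exact Finset.inf'_le _ hp
      have hx0N : ∀ q ∈ N, t q ≤ x0 := by
        intro q hq
        rw [hx0, dif_pos ⟨q, hq⟩]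
        exact Finset.le_sup' _ hq
      refine Or.inl ⟨Fin.cons x0 x', fun i => ?_⟩
      rw [Fin.sum_univ_succ]
      simp only [Fin.cons_zero, Fin.cons_succ]
      rcases lt_trichotomy (a i) 0 with h | h | h
      · have h1 : t i ≤ x0 := hx0N i (by simp [hN, h])
        have h2 : a i * x0 ≤ a i * t i := mul_le_mul_of_nonpos_left h1 h.le
        rw [ht] at h2
        dsimp only at h2
        rw [mul_div_cancel₀ _ (ne_of_lt h)] at h2
        have : A i 0 = a i := rfl
        rw [this]
        linarith
      · have : A i 0 = a i := rfl
        rw [this, h, zero_mul, zero_add]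
        exact hZ i h
      · have h1 : x0 ≤ t i := hx0P i (by simp [hP, h])
        have h2 : a i * x0 ≤ a i * t i := mul_le_mul_of_nonneg_left h1 h.le
        rw [ht] at h2
        dsimp only at h2
        rw [mul_div_cancel₀ _ (ne_of_gt h)] at h2
        have : A i 0 = a i := rfl
        rw [this]
        linarith
    · have key : ∀ c : ι → ℚ, ∑ i, (∑ r, y' r * W r i) * c i = ∑ r, y' r * ∑ i, W r i * c i := by
        intro c
        simp_rw [Finset.sum_mul, Finset.mul_sum, mul_assoc]
        exact Finset.sum_comm
      refine Or.inr ⟨fun i => ∑ r, y' r * W r i, fun i => Finset.sum_nonneg fun r _ =>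
        mul_nonneg (hy'nn r) (hWnn r i), ?_, ?_⟩
      · intro j
        refine Fin.cases ?_ ?_ j
        · rw [key a]; simp [hWa]
        · intro j
          rw [key (fun i => A i j.succ)]
          exact hy'A j
      · rw [key b]
        exact hy'b

theorem farkasZ {n : ℕ} {ι : Type} [Fintype ι] (A : ι → Fin n → ℚ) (b : ι → ℚ)
    (h : ¬ ∃ x : Fin n → ℝ, ∀ i, (∑ j, (A i j : ℝ) * x j) ≤ (b i : ℝ)) :
    ∃ y : ι → ℤ, (∀ i, 0 ≤ y i) ∧
      (∀ j, (∑ i, (y i : ℚ) * A i j) = 0) ∧ (∑ i, (y i : ℚ) * b i) < 0 := by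
  classical
  rcases farkasQ n A b with ⟨x, hx⟩ | ⟨y, hynn, hyA, hyb⟩
  · exact absurd ⟨fun j => (x j : ℝ), fun i => by
      have := hx i
      have : ((∑ j, A i j * x j : ℚ) : ℝ) ≤ ((b i : ℚ) : ℝ) := by exact_mod_cast this
      simpa using this⟩ h
  · set D : ℚ := ∏ k, ((y k).den : ℚ) with hD
    have hDpos : 0 < D := Finset.prod_pos fun k _ => by positivity
    set z : ι → ℤ := fun i => (y i).num * ∏ k ∈ Finset.univ.erase i, ((y k).den : ℤ) with hz
    have hzq : ∀ i, (z i : ℚ) = y i * D := by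
      intro i
      rw [hz, hD]
      push_cast
      rw [← Finset.mul_prod_erase Finset.univ (fun k => ((y k).den : ℚ)) (Finset.mem_univ i)]
      rw [show (y i : ℚ) * (((y i).den : ℚ) * ∏ k ∈ Finset.univ.erase i, ((y k).den : ℚ))
          = ((y i) * ((y i).den : ℚ)) * ∏ k ∈ Finset.univ.erase i, ((y k).den : ℚ) from by ring]
      rw [Rat.mul_den_eq_num]
    refine ⟨z, fun i => ?_, fun j => ?_, ?_⟩
    · refine mul_nonneg (Rat.num_nonneg.mpr (hynn i)) (Finset.prod_nonneg fun k _ => ?_)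
      positivity
    · rw [Finset.sum_congr rfl fun i _ => by rw [hzq i]]
      rw [Finset.sum_congr rfl fun i _ => show y i * D * A i j = D * (y i * A i j) from by ring]
      rw [← Finset.mul_sum, hyA j, mul_zero]
    · rw [Finset.sum_congr rfl fun i _ => by rw [hzq i]]
      rw [Finset.sum_congr rfl fun i _ => show y i * D * b i = D * (y i * b i) from by ring]
      rw [← Finset.mul_sum]
      exact mul_neg_of_pos_of_neg hDpos hyb

namespace LRRModel
variable {σ : Type} (M : LRRModel σ)

theorem le0_sub {u w : M.Carrier} (h : M.le u w) : M.le 0 (w - u) := by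
  have := M.le_add u w (-u) h
  rw [add_neg_cancel, ← sub_eq_add_neg] at this
  exact this

theorem le0_add {a b : M.Carrier} (ha : M.le 0 a) (hb : M.le 0 b) : M.le 0 (a + b) := by
  have := M.le_add 0 a b ha
  rw [zero_add] at this
  exact M.le_trans _ _ _ hb this

theorem le0_nsmul {a : M.Carrier} (ha : M.le 0 a) : ∀ k : ℕ, M.le 0 (k • a)
  | 0 => by rw [zero_smul]; exact M.le_refl 0
  | (k + 1) => by rw [succ_nsmul]; exact M.le0_add (le0_nsmul ha k) ha

theorem le0_sum {ι : Type*} (t : Finset ι) (f : ι → M.Carrier)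
    (h : ∀ i ∈ t, M.le 0 (f i)) : M.le 0 (∑ i ∈ t, f i) :=
  Finset.sum_induction f (M.le 0 ·) (fun _ _ => M.le0_add) (M.le_refl 0) h

theorem le0_algebraMap {q : ℚ} (hq : 0 ≤ q) : M.le 0 (algebraMap ℚ M.Carrier q) := by
  have hnum : M.le 0 (algebraMap ℚ M.Carrier (q.num : ℚ)) := by
    have h1 : M.le 0 (q.num.toNat • (1 : M.Carrier)) := M.le0_nsmul M.le_zero_one _
    rw [nsmul_eq_mul, mul_one] at h1
    have h2 : algebraMap ℚ M.Carrier (q.num : ℚ) = (q.num.toNat : M.Carrier) := by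
      rw [show ((q.num : ℚ)) = ((q.num.toNat : ℚ)) from by
        exact_mod_cast (Int.toNat_of_nonneg (Rat.num_nonneg.mpr hq)).symm]
      rw [map_natCast]
    rw [h2]
    exact h1
  refine M.unperforated q.den _ q.pos ?_
  have : (q.den : ℕ) • algebraMap ℚ M.Carrier q = algebraMap ℚ M.Carrier (q.num : ℚ) := by
    rw [← Nat.cast_smul_eq_nsmul ℚ, Algebra.smul_def, ← map_mul]
    congr 1
    rw [mul_comm]
    exact Rat.mul_den_eq_num q
  rw [this]
  exact hnum

theorem not_le0_neg {c : ℚ} (hc : c < 0) : ¬ M.le 0 (algebraMap ℚ M.Carrier c) := by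
  intro h1
  have h2 : M.le 0 (algebraMap ℚ M.Carrier (-c)) := M.le0_algebraMap (by linarith)
  have h3 := M.le_add 0 (algebraMap ℚ M.Carrier (-c)) (algebraMap ℚ M.Carrier c) h2
  rw [zero_add, ← map_add, neg_add_cancel, map_zero] at h3
  have h4 : algebraMap ℚ M.Carrier c = 0 := M.le_antisymm _ _ h3 h1
  haveI : Nontrivial M.Carrier := ⟨⟨0, 1, M.zero_ne_one⟩⟩
  have h5 : c = 0 := by
    have := (algebraMap ℚ M.Carrier).injective
    exact this (by rw [h4, map_zero])
  linarith

end LRRModel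


/-- The standard real model as an LRR model. -/
noncomputable def RModel {σ : Type} (v : σ → ℝ) : LRRModel σ where
  Carrier := ℝ
  le := (· ≤ ·)
  le_refl := fun x => le_refl x
  le_trans := fun x y z => le_trans
  le_antisymm := fun x y => le_antisymm
  le_add := fun x y z h => add_le_add_left h z
  le_zero_one := zero_le_one
  zero_ne_one := zero_ne_one
  unperforated := by
    intro n x hn hx
    rw [nsmul_eq_mul] at hx
    have h1 : (1:ℝ) ≤ n := by exact_mod_cast hn
    nlinarith [hx, h1]
  val := v

theorem evalM_RModel {σ : Type} (v : σ → ℝ) (t : AffTerm σ) :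
    t.evalM (RModel v) = t.evalR v := by
  show (t.coeff.sum fun x c => c • v x) + (algebraMap ℚ ℝ) t.const
      = (t.coeff.sum fun x c => (c : ℝ) * v x) + (t.const : ℝ)
  rw [eq_ratCast (algebraMap ℚ ℝ) t.const]
  congr 1

theorem satR_to_satM {σ : Type} (v : σ → ℝ) (F : PosForm σ) (h : F.satR v) :
    F.satM (RModel v) := by
  induction F with
  | le t s => show (RModel v).le _ _ ; rw [evalM_RModel, evalM_RModel]; exact h
  | eq t s => show _ = _ ; rw [evalM_RModel, evalM_RModel]; exact h
  | and F G ihF ihG => exact ⟨ihF h.1, ihG h.2⟩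
  | or F G ihF ihG => exact h.elim (fun h => Or.inl (ihF h)) (fun h => Or.inr (ihG h))

/-- DNF branches of a positive formula, as lists of ≤-atoms. -/
def branches {σ : Type} : PosForm σ → List (List (AffTerm σ × AffTerm σ))
  | .le t s => [[(t, s)]]
  | .eq t s => [[(t, s), (s, t)]]
  | .and F G => (branches F).flatMap (fun a => (branches G).map (a ++ ·))
  | .or F G => branches F ++ branches G

theorem satR_iff_branches {σ : Type} (v : σ → ℝ) (F : PosForm σ) :
    F.satR v ↔ ∃ B ∈ branches F, ∀ p ∈ B, p.1.evalR v ≤ p.2.evalR v := by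
  induction F with
  | le t s => simp [PosForm.satR, branches]
  | eq t s =>
    show (t.evalR v = s.evalR v) ↔ _
    constructor
    · intro h
      refine ⟨[(t, s), (s, t)], by simp [branches], ?_⟩
      intro p hp
      rcases List.mem_cons.mp hp with rfl | hp
      · exact le_of_eq h
      · rcases List.mem_singleton.mp hp with rfl
        exact ge_of_eq h
    · rintro ⟨B, hB, h⟩
      rcases List.mem_singleton.mp hB with rfl
      exact le_antisymm (h (t, s) (by simp)) (h (s, t) (by simp))
  | and F G ihF ihG =>
    show (F.satR v ∧ G.satR v) ↔ _
    rw [ihF, ihG]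
    constructor
    · rintro ⟨⟨B1, hB1, h1⟩, ⟨B2, hB2, h2⟩⟩
      refine ⟨B1 ++ B2, ?_, ?_⟩
      · simp only [branches, List.mem_flatMap, List.mem_map]
        exact ⟨B1, hB1, B2, hB2, rfl⟩
      · rw [List.forall_mem_append]; exact ⟨h1, h2⟩
    · rintro ⟨B, hB, h⟩
      simp only [branches, List.mem_flatMap, List.mem_map] at hB
      obtain ⟨B1, hB1, B2, hB2, rfl⟩ := hB
      rw [List.forall_mem_append] at h
      exact ⟨⟨B1, hB1, h.1⟩, ⟨B2, hB2, h.2⟩⟩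
  | or F G ihF ihG =>
    show (F.satR v ∨ G.satR v) ↔ _
    rw [ihF, ihG]
    constructor
    · rintro (⟨B, hB, h⟩ | ⟨B, hB, h⟩)
      · exact ⟨B, by simp [branches, hB], h⟩
      · exact ⟨B, by simp [branches, hB], h⟩
    · rintro ⟨B, hB, h⟩
      simp only [branches, List.mem_append] at hB
      exact hB.elim (fun hB => Or.inl ⟨B, hB, h⟩) (fun hB => Or.inr ⟨B, hB, h⟩)

theorem satM_to_branches {σ : Type} (M : LRRModel σ) (F : PosForm σ) (h : F.satM M) :
    ∃ B ∈ branches F, ∀ p ∈ B, M.le (p.1.evalM M) (p.2.evalM M) := by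
  induction F with
  | le t s => exact ⟨[(t, s)], by simp [branches], by simpa using (show M.le (t.evalM M) (s.evalM M) from h)⟩
  | eq t s =>
    refine ⟨[(t, s), (s, t)], by simp [branches], ?_⟩
    have h' : t.evalM M = s.evalM M := h
    intro p hp
    rcases List.mem_cons.mp hp with rfl | hp
    · rw [show AffTerm.evalM M (t, s).1 = AffTerm.evalM M (t, s).2 from h']
      exact M.le_refl _
    · rcases List.mem_singleton.mp hp with rfl
      rw [show AffTerm.evalM M t = AffTerm.evalM M s from h']
      exact M.le_refl _
  | and F G ihF ihG =>
    obtain ⟨B1, hB1, h1⟩ := ihF h.1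
    obtain ⟨B2, hB2, h2⟩ := ihG h.2
    refine ⟨B1 ++ B2, ?_, ?_⟩
    · simp only [branches, List.mem_flatMap, List.mem_map]
      exact ⟨B1, hB1, B2, hB2, rfl⟩
    · rw [List.forall_mem_append]; exact ⟨h1, h2⟩
  | or F G ihF ihG =>
    rcases h with h | h
    · obtain ⟨B, hB, h'⟩ := ihF h
      exact ⟨B, by simp [branches, hB], h'⟩
    · obtain ⟨B, hB, h'⟩ := ihG h
      exact ⟨B, by simp [branches, hB], h'⟩

theorem evalR_eq_sum {σ : Type} [DecidableEq σ] (v : σ → ℝ) (t : AffTerm σ) (s : Finset σ)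
    (hs : t.coeff.support ⊆ s) :
    t.evalR v = ∑ z ∈ s, (t.coeff z : ℝ) * v z + (t.const : ℝ) := by
  unfold AffTerm.evalR
  congr 1
  exact Finsupp.sum_of_support_subset _ hs _ (fun z _ => by simp)

theorem evalM_eq_sum {σ : Type} [DecidableEq σ] (M : LRRModel σ) (t : AffTerm σ) (s : Finset σ)
    (hs : t.coeff.support ⊆ s) :
    t.evalM M = ∑ z ∈ s, t.coeff z • M.val z + algebraMap ℚ M.Carrier t.const := by
  unfold AffTerm.evalM
  congr 1
  exact Finsupp.sum_of_support_subset _ hs _ (fun z _ => by simp)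

theorem branch_transfer {σ : Type} (B : List (AffTerm σ × AffTerm σ))
    (h : ¬ ∃ v : σ → ℝ, ∀ p ∈ B, p.1.evalR v ≤ p.2.evalR v) (M : LRRModel σ) :
    ¬ ∀ p ∈ B, M.le (p.1.evalM M) (p.2.evalM M) := by
  classical
  intro hsat
  set s : Finset σ := B.toFinset.sup (fun p => p.1.coeff.support ∪ p.2.coeff.support) with hs
  have hsub : ∀ p ∈ B, p.1.coeff.support ⊆ s ∧ p.2.coeff.support ⊆ s := by
    intro p hp
    have h1 : p.1.coeff.support ∪ p.2.coeff.support ≤ s :=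
      Finset.le_sup (f := fun p => p.1.coeff.support ∪ p.2.coeff.support)
        (List.mem_toFinset.mpr hp)
    exact Finset.union_subset_iff.mp h1
  set n : ℕ := s.card with hn
  set e : {x // x ∈ s} ≃ Fin n := s.equivFin with he
  set m : ℕ := B.length with hm
  set A : Fin m → Fin n → ℚ := fun i j =>
    (B.get i).1.coeff (e.symm j).1 - (B.get i).2.coeff (e.symm j).1 with hA
  set bb : Fin m → ℚ := fun i => (B.get i).2.const - (B.get i).1.const with hbb
  -- the system is unsatisfiable over ℝ
  have hRunsat : ¬ ∃ x : Fin n → ℝ, ∀ i, (∑ j, (A i j : ℝ) * x j) ≤ (bb i : ℝ) := by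
    rintro ⟨x, hx⟩
    apply h
    refine ⟨fun z => if hz : z ∈ s then x (e ⟨z, hz⟩) else 0, ?_⟩
    intro p hp
    obtain ⟨i, hi⟩ := List.mem_iff_get.mp hp
    set v : σ → ℝ := fun z => if hz : z ∈ s then x (e ⟨z, hz⟩) else 0 with hv
    have hvz : ∀ j : Fin n, v (e.symm j).1 = x j := by
      intro j
      rw [hv]
      dsimp only
      rw [dif_pos (e.symm j).2]
      congr 1
      rw [show (⟨(e.symm j).1, (e.symm j).2⟩ : {x // x ∈ s}) = e.symm j from rfl]
      exact e.apply_symm_apply j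
    have key : ∀ t : AffTerm σ, t.coeff.support ⊆ s →
        t.evalR v = ∑ j : Fin n, (t.coeff (e.symm j).1 : ℝ) * x j + (t.const : ℝ) := by
      intro t ht
      rw [evalR_eq_sum v t s ht]
      congr 1
      rw [← Finset.sum_coe_sort s (fun z => (t.coeff z : ℝ) * v z)]
      rw [← Equiv.sum_comp e.symm (fun a : {x // x ∈ s} => (t.coeff a.1 : ℝ) * v a.1)]
      exact Finset.sum_congr rfl fun j _ => by rw [hvz j]
    rw [key p.1 (hsub p hp).1, key p.2 (hsub p hp).2]
    have hrow : ∑ j, (((B.get i).1.coeff (e.symm j).1 - (B.get i).2.coeff (e.symm j).1 : ℚ) : ℝ)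
        * x j ≤ (((B.get i).2.const - (B.get i).1.const : ℚ) : ℝ) := hx i
    push_cast at hrow
    rw [hi] at hrow
    have : ∑ j, ((p.1.coeff (e.symm j).1 : ℝ) - (p.2.coeff (e.symm j).1 : ℝ)) * x j
        = ∑ j, (p.1.coeff (e.symm j).1 : ℝ) * x j - ∑ j, (p.2.coeff (e.symm j).1 : ℝ) * x j := by
      rw [← Finset.sum_sub_distrib]
      exact Finset.sum_congr rfl fun j _ => by ring
    rw [this] at hrow
    linarith
  obtain ⟨y, hynn, hyA, hyb⟩ := farkasZ A bb hRunsat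
  -- now derive a contradiction in M
  set d : Fin m → M.Carrier := fun i => (B.get i).2.evalM M - (B.get i).1.evalM M with hd
  have hgm : ∀ i : Fin m, B.get i ∈ B := fun i => B.get_mem i
  have h0d : ∀ i, M.le 0 (d i) :=
    fun i => M.le0_sub (hsat (B.get i) (hgm i))
  have hS : M.le 0 (∑ i, (y i).toNat • d i) :=
    M.le0_sum _ _ (fun i _ => M.le0_nsmul (h0d i) _)
  set c : ℚ := ∑ i, (y i : ℚ) * bb i with hc
  have hSc : ∑ i, (y i).toNat • d i = algebraMap ℚ M.Carrier c := by
    have h1 : ∀ i : Fin m, (y i).toNat • d i = ((y i : ℚ)) • d i := by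
      intro i
      rw [← Nat.cast_smul_eq_nsmul ℚ]
      congr 1
      exact_mod_cast Int.toNat_of_nonneg (hynn i)
    have hdi : ∀ i : Fin m, d i =
        ∑ z ∈ s, ((B.get i).2.coeff z - (B.get i).1.coeff z) • M.val z
          + algebraMap ℚ M.Carrier (bb i) := by
      intro i
      rw [hd]
      dsimp only
      rw [evalM_eq_sum M _ s (hsub _ (hgm i)).2, evalM_eq_sum M _ s (hsub _ (hgm i)).1]
      rw [hbb]
      dsimp only
      simp only [sub_smul, Finset.sum_sub_distrib, map_sub]
      abel
    calc ∑ i, (y i).toNat • d i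
        = ∑ i, ((y i : ℚ)) • d i := Finset.sum_congr rfl fun i _ => h1 i
      _ = ∑ i, (∑ z ∈ s, ((y i : ℚ) * ((B.get i).2.coeff z - (B.get i).1.coeff z)) • M.val z
            + algebraMap ℚ M.Carrier ((y i : ℚ) * bb i)) := by
          refine Finset.sum_congr rfl fun i _ => ?_
          rw [hdi i, smul_add, Finset.smul_sum]
          congr 1
          · exact Finset.sum_congr rfl fun z _ => (smul_smul _ _ _)
          · rw [Algebra.smul_def, ← map_mul]
      _ = (∑ z ∈ s, (∑ i, (y i : ℚ) * ((B.get i).2.coeff z - (B.get i).1.coeff z)) • M.val z)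
            + algebraMap ℚ M.Carrier c := by
          rw [Finset.sum_add_distrib, Finset.sum_comm, hc, map_sum]
          congr 1
          exact Finset.sum_congr rfl fun z _ => (Finset.sum_smul).symm
      _ = algebraMap ℚ M.Carrier c := by
          rw [Finset.sum_congr rfl (g := fun _ => (0 : M.Carrier)) fun z hz => ?_,
            Finset.sum_const_zero, zero_add]
          have hcoef : ∑ i, (y i : ℚ) * ((B.get i).2.coeff z - (B.get i).1.coeff z) = 0 := by
            have h2 := hyA (e ⟨z, hz⟩)
            have hAze : ∀ i : Fin m, A i (e ⟨z, hz⟩)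
                = (B.get i).1.coeff z - (B.get i).2.coeff z := by
              intro i; rw [hA]; dsimp only; rw [e.symm_apply_apply]
            simp only [hAze] at h2
            have h3 : ∑ i, (y i : ℚ) * ((B.get i).2.coeff z - (B.get i).1.coeff z)
                = -∑ i, (y i : ℚ) * ((B.get i).1.coeff z - (B.get i).2.coeff z) := by
              rw [← Finset.sum_neg_distrib]
              exact Finset.sum_congr rfl fun i _ => by ring
            rw [h3, h2, neg_zero]
          rw [hcoef, zero_smul]
  rw [hSc] at hS
  exact M.not_le0_neg hyb hS

/-- a ground negation-free formula in the language of linear real arithmetic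
is satisfiable modulo `LRA` iff it is satisfiable modulo the weaker theory `LRR`; and
(Farkas' lemma) if a conjunction of linear inequalities `A x ≤ b` is `LRA`-unsatisfiable,
then there is a nonnegative integer vector `y` with `yᵀA = 0` and `yᵀb < 0`. -/
theorem lra_sat_iff_lrr_sat_and_farkas {σ : Type} :
    (∀ F : PosForm σ,
      (∃ v : σ → ℝ, F.satR v) ↔ (∃ M : LRRModel σ, F.satM M)) ∧
    (∀ (m n : ℕ) (A : Matrix (Fin m) (Fin n) ℚ) (b : Fin m → ℚ),
      (¬ ∃ x : Fin n → ℝ, ∀ i, (∑ j, (A i j : ℝ) * x j) ≤ (b i : ℝ)) →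
      ∃ y : Fin m → ℤ, (∀ i, 0 ≤ y i) ∧
        (∀ j, (∑ i, (y i : ℚ) * A i j) = 0) ∧ (∑ i, (y i : ℚ) * b i) < 0) := by
  constructor
  · intro F
    constructor
    · rintro ⟨v, hv⟩
      exact ⟨RModel v, satR_to_satM v F hv⟩
    · rintro ⟨M, hM⟩
      by_contra hnv
      push_neg at hnv
      obtain ⟨B, hB, hBM⟩ := satM_to_branches M F hM
      refine branch_transfer B ?_ M hBM
      rintro ⟨v, hv⟩
      exact hnv v ((satR_iff_branches v F).mpr ⟨B, hB, hv⟩)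
  · intro m n A b h
    exact farkasZ (fun i j => A i j) b h
end

section
/- Let Z, P ⊆ Q[X] with Z a Gröbner basis and every element of P reduced with respect to Z (for a fixed monomial order ⪯). If q ∈ ideal(Z) + cone(P) is written q = z + p with z ∈ ideal(Z) and p ∈ cone(P), then LM(z) ⪯ LM(q) and LM(p) ⪯ LM(q) (whenever z, p are nonzero). -/
/-!
A monomial divisible by some `lm g`, `g ∈ Z`, occurs in no element of `P`, hence (coefficients
being linear) in no element of `cone(P)`. By the Gröbner property `lm z` is such a monomial, so
`lm z` survives in `q = z + p` and is a monomial of `q`. If `lm p` did not survive in `q`, it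
would be cancelled by `z`, giving `lm p ⪯ lm z ⪯ lm q`.
-/

open MvPolynomial

/-- `cone(P)`: the set of finite nonnegative rational combinations of elements of `P`. -/
def coneGen {σ : Type} (P : Set (MvPolynomial σ ℚ)) : Set (MvPolynomial σ ℚ) :=
  {q | ∃ (s : Finset (MvPolynomial σ ℚ)) (c : MvPolynomial σ ℚ → ℚ),
      (↑s : Set (MvPolynomial σ ℚ)) ⊆ P ∧ (∀ p ∈ s, 0 ≤ c p) ∧ q = ∑ p ∈ s, c p • p}

theorem coneGen_subset_span {σ : Type} (P : Set (MvPolynomial σ ℚ)) :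
    coneGen P ⊆ Submodule.span ℚ P := by
  rintro _ ⟨s, c, hsP, -, rfl⟩
  exact Submodule.sum_mem _ fun f hf => Submodule.smul_mem _ _ (Submodule.subset_span (hsP hf))

theorem MvPolynomial.coeff_eq_zero_of_mem_span {σ R : Type*} [CommSemiring R]
    {P : Set (MvPolynomial σ R)} {m : σ →₀ ℕ} (hP : ∀ f ∈ P, coeff m f = 0)
    {p : MvPolynomial σ R} (hp : p ∈ Submodule.span R P) : coeff m p = 0 :=
  (Submodule.span_le (p := LinearMap.ker (lcoeff R m)) |>.mpr hP) hp

def IsLeadingMonomialFn {σ R : Type*} [CommSemiring R] (mo : (σ →₀ ℕ) → (σ →₀ ℕ) → Prop)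
    (lm : MvPolynomial σ R → (σ →₀ ℕ)) : Prop :=
  ∀ p : MvPolynomial σ R, p ≠ 0 → lm p ∈ p.support ∧ ∀ m ∈ p.support, mo m (lm p)

namespace IsLeadingMonomialFn

variable {σ R : Type*} [CommSemiring R] {mo : (σ →₀ ℕ) → (σ →₀ ℕ) → Prop}
  {lm : MvPolynomial σ R → (σ →₀ ℕ)}

theorem coeff_ne_zero (hlm : IsLeadingMonomialFn mo lm) {p : MvPolynomial σ R} (hp : p ≠ 0) :
    coeff (lm p) p ≠ 0 :=
  mem_support_iff.mp (hlm p hp).1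

theorem le_of_coeff_ne_zero (hlm : IsLeadingMonomialFn mo lm) {p : MvPolynomial σ R}
    {m : σ →₀ ℕ} (hm : coeff m p ≠ 0) : mo m (lm p) :=
  (hlm p (ne_of_apply_ne (coeff m) (by simpa using hm))).2 m (mem_support_iff.mpr hm)

theorem le_lm_add (hlm : IsLeadingMonomialFn mo lm)
    (mo_trans : ∀ m n k, mo m n → mo n k → mo m k) {z p : MvPolynomial σ R}
    (hzp : z ≠ 0 → coeff (lm z) p = 0) :
    (z ≠ 0 → mo (lm z) (lm (z + p))) ∧ (p ≠ 0 → mo (lm p) (lm (z + p))) := by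
  have hz_le : z ≠ 0 → mo (lm z) (lm (z + p)) := fun hz =>
    hlm.le_of_coeff_ne_zero (by simpa [coeff_add, hzp hz] using hlm.coeff_ne_zero hz)
  refine ⟨hz_le, fun hp => ?_⟩
  by_cases hq : coeff (lm p) (z + p) = 0
  · have hcz : coeff (lm p) z ≠ 0 := fun h =>
      hlm.coeff_ne_zero hp (by simpa [coeff_add, h] using hq)
    have hz : z ≠ 0 := by rintro rfl; simp at hcz
    exact mo_trans _ _ _ (hlm.le_of_coeff_ne_zero hcz) (hz_le hz)
  · exact hlm.le_of_coeff_ne_zero hq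

end IsLeadingMonomialFn

theorem decomposition_lemma_general {σ : Type}
    (mo : (σ →₀ ℕ) → (σ →₀ ℕ) → Prop)
    (mo_trans : ∀ m n k, mo m n → mo n k → mo m k)
    (lm : MvPolynomial σ ℚ → (σ →₀ ℕ))
    (hlm : ∀ p : MvPolynomial σ ℚ, p ≠ 0 →
      lm p ∈ p.support ∧ ∀ m ∈ p.support, mo m (lm p))
    (Z P : Set (MvPolynomial σ ℚ))
    (hGB : ∀ q ∈ Ideal.span Z, q ≠ 0 → ∃ g ∈ Z, g ≠ 0 ∧ ∃ d, lm q = lm g + d)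
    (hPred : ∀ p ∈ P, ∀ m ∈ p.support, ∀ g ∈ Z, g ≠ 0 → ¬ ∃ d, m = lm g + d) :
    ∀ (q z p : MvPolynomial σ ℚ), z ∈ Ideal.span Z → p ∈ coneGen P → q = z + p →
      (z ≠ 0 → mo (lm z) (lm q)) ∧ (p ≠ 0 → mo (lm p) (lm q)) := by
  rintro _ z p hz hp rfl
  have hlm : IsLeadingMonomialFn mo lm := hlm
  refine hlm.le_lm_add mo_trans fun hz0 => ?_
  obtain ⟨g, hgZ, hg0, hdvd⟩ := hGB z hz hz0
  refine coeff_eq_zero_of_mem_span (fun f hf => ?_) (coneGen_subset_span P hp)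
  exact notMem_support_iff.mp fun hm => hPred f hf _ hm g hgZ hg0 hdvd

/-- decomposition lemma: fix a monomial order `mo` on monomials `σ →₀ ℕ`
(a linear order, compatible with multiplication of monomials, with `1` least), and let
`lm p` be the leading monomial of a nonzero polynomial `p`.  Let `Z` be a Gröbner basis
(every nonzero member of `ideal(Z)` has leading monomial divisible by the leading monomial
of some nonzero `g ∈ Z`) and let every `p ∈ P` be reduced w.r.t. `Z` (no monomial of `p`
divisible by `lm g`, `g ∈ Z`).  If `q ∈ ideal(Z) + cone(P)` is written `q = z + p` with
`z ∈ ideal(Z)` and `p ∈ cone(P)`, then `lm z ⪯ lm q` and `lm p ⪯ lm q`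
(whenever `z`, `p` are nonzero). -/
theorem decomposition_lemma {σ : Type} [Fintype σ]
    (mo : (σ →₀ ℕ) → (σ →₀ ℕ) → Prop)
    (mo_total : ∀ m n, mo m n ∨ mo n m)
    (mo_antisymm : ∀ m n, mo m n → mo n m → m = n)
    (mo_trans : ∀ m n k, mo m n → mo n k → mo m k)
    (mo_add : ∀ m n k, mo m n → mo (m + k) (n + k))
    (mo_bot : ∀ m, mo 0 m)
    (lm : MvPolynomial σ ℚ → (σ →₀ ℕ))
    (hlm : ∀ p : MvPolynomial σ ℚ, p ≠ 0 →
      lm p ∈ p.support ∧ ∀ m ∈ p.support, mo m (lm p))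
    (Z P : Set (MvPolynomial σ ℚ))
    (hGB : ∀ q ∈ Ideal.span Z, q ≠ 0 → ∃ g ∈ Z, g ≠ 0 ∧ ∃ d, lm q = lm g + d)
    (hPred : ∀ p ∈ P, ∀ m ∈ p.support, ∀ g ∈ Z, g ≠ 0 → ¬ ∃ d, m = lm g + d) :
    ∀ (q z p : MvPolynomial σ ℚ), z ∈ Ideal.span Z → p ∈ coneGen P → q = z + p →
      (z ≠ 0 → mo (lm z) (lm q)) ∧ (p ≠ 0 → mo (lm p) (lm q)) :=
  decomposition_lemma_general mo mo_trans lm hlm Z P hGB hPred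
end

section
/- Projection of algebraic cones: let Z, P ⊆ Q[Y] be finite, X ⊆ Y, G a Gröbner basis of ideal(Z) with respect to an elimination order ⪯_X eliminating Y∖X. Then ideal_{Q[X]}(G ∩ Q[X]) + (cone({red_G(p) : p ∈ P}) ∩ Q[X]) equals (ideal_{Q[Y]}(Z) + cone(P)) ∩ Q[X]. -/
open MvPolynomial Pointwise

/-- The set of combinations `Σ cᵢ sᵢ` with coefficients `cᵢ ∈ A` and `sᵢ ∈ S`;
for `A = ℚ[X]` (as a subset of `ℚ[Y]`) this is the ideal of `ℚ[X]` generated by `S`. -/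
def modGen {σ : Type} (A S : Set (MvPolynomial σ ℚ)) : Set (MvPolynomial σ ℚ) :=
  {q | ∃ (s : Finset (MvPolynomial σ ℚ)) (c : MvPolynomial σ ℚ → MvPolynomial σ ℚ),
      (↑s : Set (MvPolynomial σ ℚ)) ⊆ S ∧ (∀ p ∈ s, c p ∈ A) ∧ q = ∑ p ∈ s, c p * p}

/-- The subring `ℚ[X] ⊆ ℚ[Y]` of polynomials only involving the variables `X ⊆ Y`. -/
def polysOn {σ : Type} (X : Set σ) : Set (MvPolynomial σ ℚ) :=
  {p | ∀ m ∈ p.support, (m.support : Set σ) ⊆ X}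

namespace ProjAux

variable {σ : Type} {X : Set σ}

lemma expgood_addl {a b : σ →₀ ℕ} (h : (((a + b).support : Finset σ) : Set σ) ⊆ X) :
    ((a.support : Finset σ) : Set σ) ⊆ X := by
  intro x hx
  apply h
  rw [Finset.mem_coe, Finsupp.mem_support_iff] at *
  simp only [Finsupp.add_apply]
  omega

lemma expgood_addr {a b : σ →₀ ℕ} (h : (((a + b).support : Finset σ) : Set σ) ⊆ X) :
    ((b.support : Finset σ) : Set σ) ⊆ X := by
  rw [add_comm] at h; exact expgood_addl h

lemma polysOn_zero : (0 : MvPolynomial σ ℚ) ∈ polysOn X := by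
  intro m hm; simp at hm

lemma polysOn_add {p q : MvPolynomial σ ℚ} (hp : p ∈ polysOn X) (hq : q ∈ polysOn X) :
    p + q ∈ polysOn X := by
  classical
  intro m hm
  rcases Finset.mem_union.1 (MvPolynomial.support_add hm) with h | h
  · exact hp m h
  · exact hq m h

lemma polysOn_neg {p : MvPolynomial σ ℚ} (hp : p ∈ polysOn X) : -p ∈ polysOn X := by
  intro m hm
  rw [MvPolynomial.support_neg] at hm
  exact hp m hm

lemma polysOn_sub {p q : MvPolynomial σ ℚ} (hp : p ∈ polysOn X) (hq : q ∈ polysOn X) :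
    p - q ∈ polysOn X := by
  rw [sub_eq_add_neg]; exact polysOn_add hp (polysOn_neg hq)

lemma polysOn_smul {a : ℚ} {p : MvPolynomial σ ℚ} (hp : p ∈ polysOn X) :
    a • p ∈ polysOn X := fun m hm => hp m (MvPolynomial.support_smul hm)

lemma polysOn_mul {p q : MvPolynomial σ ℚ} (hp : p ∈ polysOn X) (hq : q ∈ polysOn X) :
    p * q ∈ polysOn X := by
  classical
  intro m hm
  obtain ⟨u, hu, v, hv, rfl⟩ := Finset.mem_add.1 (MvPolynomial.support_mul p q hm)
  intro x hx
  rw [Finset.mem_coe, Finsupp.mem_support_iff, Finsupp.add_apply] at hx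
  have : u x ≠ 0 ∨ v x ≠ 0 := by omega
  rcases this with h' | h'
  · exact hp u hu (Finset.mem_coe.2 (Finsupp.mem_support_iff.2 h'))
  · exact hq v hv (Finset.mem_coe.2 (Finsupp.mem_support_iff.2 h'))

lemma polysOn_monomial {d : σ →₀ ℕ} (hd : ((d.support : Finset σ) : Set σ) ⊆ X) (a : ℚ) :
    (MvPolynomial.monomial d a : MvPolynomial σ ℚ) ∈ polysOn X := by
  classical
  intro m hm
  rw [MvPolynomial.support_monomial] at hm
  split at hm
  · simp at hm
  · rw [Finset.mem_singleton] at hm; subst hm; exact hd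

lemma polysOn_sum {α : Type*} (s : Finset α) (f : α → MvPolynomial σ ℚ)
    (hf : ∀ i ∈ s, f i ∈ polysOn X) : (∑ i ∈ s, f i) ∈ polysOn X := by
  classical
  induction s using Finset.induction_on with
  | empty => simpa using polysOn_zero
  | insert _ _ ha ih =>
      rw [Finset.sum_insert ha]
      exact polysOn_add (hf _ (Finset.mem_insert_self _ _))
        (ih fun i hi => hf i (Finset.mem_insert_of_mem hi))

end ProjAux

open ProjAux in
/-- projection of algebraic cones: let `Z, P ⊆ ℚ[Y]` be finite, `X ⊆ Y`,
`G` a Gröbner basis of `ideal(Z)` with respect to an elimination order `⪯_X` eliminating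
`Y∖X` (any monomial containing a variable outside `X` is strictly above every monomial in
`ℚ[X]`), with reduction map `red`.  Then
`ideal_{ℚ[X]}(G ∩ ℚ[X]) + (cone({red p : p ∈ P}) ∩ ℚ[X]) = (ideal_{ℚ[Y]}(Z) + cone(P)) ∩ ℚ[X]`. -/
theorem projection_of_algebraic_cones {σ : Type} [Fintype σ] (X : Set σ)
    (mo : (σ →₀ ℕ) → (σ →₀ ℕ) → Prop)
    (mo_total : ∀ m n, mo m n ∨ mo n m)
    (mo_antisymm : ∀ m n, mo m n → mo n m → m = n)
    (mo_trans : ∀ m n k, mo m n → mo n k → mo m k)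
    (mo_add : ∀ m n k, mo m n → mo (m + k) (n + k))
    (mo_bot : ∀ m, mo 0 m)
    -- `mo` is an elimination order for `X`
    (mo_elim : ∀ m n : σ →₀ ℕ, (m.support : Set σ) ⊆ X → ¬ (n.support : Set σ) ⊆ X →
      mo m n ∧ m ≠ n)
    (lm : MvPolynomial σ ℚ → (σ →₀ ℕ))
    (hlm : ∀ p : MvPolynomial σ ℚ, p ≠ 0 →
      lm p ∈ p.support ∧ ∀ m ∈ p.support, mo m (lm p))
    (Z P G : Set (MvPolynomial σ ℚ)) (hZfin : Z.Finite) (hPfin : P.Finite) (hGfin : G.Finite)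
    (hG : Ideal.span G = Ideal.span Z)
    -- `G` is a Gröbner basis w.r.t. `mo`
    (hGB : ∀ q ∈ Ideal.span G, q ≠ 0 → ∃ g ∈ G, g ≠ 0 ∧ ∃ d, lm q = lm g + d)
    -- `red` is the normal-form (reduction) map for `G`
    (red : MvPolynomial σ ℚ → MvPolynomial σ ℚ)
    (hred_zero : ∀ q : MvPolynomial σ ℚ, red q = 0 ↔ q ∈ Ideal.span G)
    (hred_sub : ∀ q : MvPolynomial σ ℚ, q - red q ∈ Ideal.span G)
    (hred_reduced : ∀ q : MvPolynomial σ ℚ, ∀ m ∈ (red q).support,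
      ∀ g ∈ G, g ≠ 0 → ¬ ∃ d, m = lm g + d) :
    modGen (polysOn X) (G ∩ polysOn X) + (coneGen (red '' P) ∩ polysOn X) =
      ((↑(Ideal.span Z) : Set (MvPolynomial σ ℚ)) + coneGen P) ∩ polysOn X := by
  classical
  -- Well-foundedness of the strict order associated to `mo`
  have hWF : WellFounded (fun a b : σ →₀ ℕ => mo a b ∧ a ≠ b) := by
    have hpwo : (Set.univ : Set (σ →₀ ℕ)).PartiallyWellOrderedOn mo := by
      intro f
      obtain ⟨m, n, hmn, hle⟩ := Set.isPWO_of_wellQuasiOrderedLE (Set.univ : Set (σ →₀ ℕ)) f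
      refine ⟨m, n, hmn, ?_⟩
      change mo (f m).1 (f n).1
      obtain ⟨k, hk⟩ := le_iff_exists_add.1 hle
      have h := mo_add 0 k (f m) (mo_bot k)
      rw [zero_add, add_comm] at h
      exact hk ▸ h
    letI : IsPreorder (σ →₀ ℕ) mo :=
      { refl := fun a => (mo_total a a).elim id id
        trans := mo_trans }
    have hWF' : WellFounded (fun a b : σ →₀ ℕ => mo a b ∧ ¬ mo b a) :=
      Set.wellFoundedOn_univ.1 hpwo.wellFoundedOn
    exact Subrelation.wf
      (fun {a b} h => ⟨h.1, fun h3 => h.2 (mo_antisymm _ _ h.1 h3)⟩) hWF'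
  -- a nonzero polynomial with `X`-good leading monomial is in `polysOn X`
  have all_good : ∀ {p : MvPolynomial σ ℚ}, p ≠ 0 → ((lm p).support : Set σ) ⊆ X →
      p ∈ polysOn X := by
    intro p hp hlmp m hm
    by_contra hbad
    obtain ⟨h1, h2⟩ := mo_elim (lm p) m hlmp hbad
    exact h2 (mo_antisymm _ _ h1 ((hlm p hp).2 m hm))
  -- mo-maximal element of a nonempty finset
  have exists_max : ∀ s : Finset (σ →₀ ℕ), s.Nonempty → ∃ m ∈ s, ∀ n ∈ s, mo n m := by
    intro s hs
    induction s using Finset.induction_on with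
    | empty => simp at hs
    | @insert a s ha ih =>
        rcases s.eq_empty_or_nonempty with rfl | hne
        · exact ⟨a, Finset.mem_insert_self _ _, by
            intro n hn
            rw [Finset.mem_insert] at hn
            rcases hn with rfl | hn
            · exact (mo_total n n).elim id id
            · simp at hn⟩
        · obtain ⟨m, hm, hmax⟩ := ih hne
          rcases mo_total a m with h | h
          · refine ⟨m, Finset.mem_insert_of_mem hm, ?_⟩
            intro n hn
            rcases Finset.mem_insert.1 hn with rfl | hn
            · exact h
            · exact hmax n hn
          · refine ⟨a, Finset.mem_insert_self _ _, ?_⟩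
            intro n hn
            rcases Finset.mem_insert.1 hn with rfl | hn
            · exact (mo_total n n).elim id id
            · exact mo_trans _ _ _ (hmax n hn) h
  -- KEY 1: if `w + r0 ∈ polysOn X`, `w ∈ span G` and `r0` is reduced, then `r0 ∈ polysOn X`
  have maxlem : ∀ w r0 : MvPolynomial σ ℚ, (w + r0) ∈ polysOn X → w ∈ Ideal.span G →
      (∀ m ∈ r0.support, ∀ g ∈ G, g ≠ 0 → ¬ ∃ d, m = lm g + d) → r0 ∈ polysOn X := by
    intro w r0 hq hw hr
    by_contra hbad0
    have hbad : ∃ m ∈ r0.support, ¬ (m.support : Set σ) ⊆ X := by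
      by_contra h
      push_neg at h
      exact hbad0 h
    obtain ⟨m0, hm0, hm0bad⟩ := hbad
    set B := (w.support ∪ r0.support).filter (fun m => ¬ (m.support : Set σ) ⊆ X) with hB
    have hBne : B.Nonempty :=
      ⟨m0, Finset.mem_filter.2 ⟨Finset.mem_union_right _ hm0, hm0bad⟩⟩
    obtain ⟨m, hmB, hmax⟩ := exists_max B hBne
    have hmbad : ¬ (m.support : Set σ) ⊆ X := (Finset.mem_filter.1 hmB).2
    have hmun := (Finset.mem_filter.1 hmB).1
    have hq0 : MvPolynomial.coeff m (w + r0) = 0 := by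
      by_contra h
      exact hmbad (hq m (MvPolynomial.mem_support_iff.2 h))
    rw [MvPolynomial.coeff_add] at hq0
    have hmw : m ∈ w.support ∧ m ∈ r0.support := by
      rw [MvPolynomial.mem_support_iff, MvPolynomial.mem_support_iff]
      rcases Finset.mem_union.1 hmun with h | h <;>
        rw [MvPolynomial.mem_support_iff] at h <;>
        constructor <;> intro hc <;> apply h <;> linarith
    have hw0 : w ≠ 0 := by
      rintro rfl
      simpa using hmw.1
    have hlmw := hlm w hw0
    have hmeq : m = lm w := by
      by_cases hg : ((lm w).support : Set σ) ⊆ X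
      · obtain ⟨h1, h2⟩ := mo_elim (lm w) m hg hmbad
        exact absurd (mo_antisymm _ _ h1 (hlmw.2 m hmw.1)) h2
      · have hlmB : lm w ∈ B :=
          Finset.mem_filter.2 ⟨Finset.mem_union_left _ hlmw.1, hg⟩
        exact mo_antisymm _ _ (hlmw.2 m hmw.1) (hmax _ hlmB)
    obtain ⟨g, hg, hg0, d, hd⟩ := hGB w hw hw0
    exact hr m hmw.2 g hg hg0 ⟨d, by rw [hmeq, hd]⟩
  -- KEY 2: division — elements of `span G ∩ polysOn X` lie in `modGen (polysOn X) (G ∩ polysOn X)`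
  have GXfin : (G ∩ polysOn X).Finite := hGfin.subset Set.inter_subset_left
  set GX := GXfin.toFinset with hGX
  have hdiv : ∀ z : MvPolynomial σ ℚ, z ∈ Ideal.span G → z ∈ polysOn X →
      ∃ c : MvPolynomial σ ℚ → MvPolynomial σ ℚ,
        (∀ g, c g ∈ polysOn X) ∧ z = ∑ g ∈ GX, c g * g := by
    have main : ∀ mdeg : (σ →₀ ℕ), ∀ z : MvPolynomial σ ℚ, lm z = mdeg →
        z ∈ Ideal.span G → z ∈ polysOn X →
        ∃ c : MvPolynomial σ ℚ → MvPolynomial σ ℚ,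
          (∀ g, c g ∈ polysOn X) ∧ z = ∑ g ∈ GX, c g * g := by
      intro mdeg
      refine hWF.induction (C := fun mdeg => ∀ z : MvPolynomial σ ℚ, lm z = mdeg →
        z ∈ Ideal.span G → z ∈ polysOn X →
        ∃ c : MvPolynomial σ ℚ → MvPolynomial σ ℚ,
          (∀ g, c g ∈ polysOn X) ∧ z = ∑ g ∈ GX, c g * g) mdeg ?_
      intro mdeg ih z hlmz hzG hzX
      subst hlmz
      by_cases hz0 : z = 0
      · exact ⟨fun _ => 0, fun _ => polysOn_zero, by simp [hz0]⟩
      obtain ⟨g, hgG, hg0, d, hd⟩ := hGB z hzG hz0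
      have hzlm := hlm z hz0
      have hlmzgood : ((lm z).support : Set σ) ⊆ X := hzX _ hzlm.1
      have hlmzgood' : (((lm g + d).support : Finset σ) : Set σ) ⊆ X := hd ▸ hlmzgood
      have hgoodlmg : (((lm g).support : Finset σ) : Set σ) ⊆ X := expgood_addl hlmzgood'
      have hgoodd : ((d.support : Finset σ) : Set σ) ⊆ X := expgood_addr hlmzgood'
      have hgX : g ∈ polysOn X := all_good hg0 hgoodlmg
      have hgGX : g ∈ GX := by
        rw [hGX, Set.Finite.mem_toFinset]
        exact ⟨hgG, hgX⟩
      set a : ℚ := z.coeff (lm z) / g.coeff (lm g) with ha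
      set t : MvPolynomial σ ℚ := a • (MvPolynomial.monomial d 1 * g) with ht
      have hcg0 : g.coeff (lm g) ≠ 0 := MvPolynomial.mem_support_iff.1 (hlm g hg0).1
      have hcoefft : t.coeff (lm z) = z.coeff (lm z) := by
        rw [ht, MvPolynomial.coeff_smul, hd, add_comm (lm g) d,
          MvPolynomial.coeff_monomial_mul, one_mul, smul_eq_mul, ha,
          div_mul_cancel₀ _ hcg0, hd, add_comm (lm g) d]
      have hsupt : ∀ m ∈ t.support, ∃ n ∈ g.support, m = d + n := by
        intro m hm
        have hm1 : m ∈ (MvPolynomial.monomial d (1 : ℚ) * g).support :=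
          MvPolynomial.support_smul hm
        obtain ⟨u, hu, v, hv, rfl⟩ :=
          Finset.mem_add.1 (MvPolynomial.support_mul _ g hm1)
        have : u = d := by
          have := MvPolynomial.support_monomial_subset hu
          simpa using this
        subst this
        exact ⟨v, hv, rfl⟩
      have hsupt_lt : ∀ m ∈ t.support, mo m (lm z) := by
        intro m hm
        obtain ⟨n, hn, rfl⟩ := hsupt m hm
        have := mo_add n (lm g) d ((hlm g hg0).2 n hn)
        rw [hd]
        rw [add_comm d n]
        exact this
      have htX : t ∈ polysOn X :=
        polysOn_smul (polysOn_mul (polysOn_monomial hgoodd 1) hgX)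
      have htG : t ∈ Ideal.span G := by
        rw [ht, MvPolynomial.smul_eq_C_mul]
        exact Ideal.mul_mem_left _ _ (Ideal.mul_mem_left _ _ (Ideal.subset_span hgG))
      set z2 : MvPolynomial σ ℚ := z - t with hz2
      have hz2G : z2 ∈ Ideal.span G := Submodule.sub_mem _ hzG htG
      have hz2X : z2 ∈ polysOn X := polysOn_sub hzX htX
      have hz2coeff : z2.coeff (lm z) = 0 := by
        rw [hz2, MvPolynomial.coeff_sub, hcoefft, sub_self]
      have hz2supp : ∀ m ∈ z2.support, mo m (lm z) ∧ m ≠ lm z := by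
        intro m hm
        constructor
        · have := MvPolynomial.support_sub σ z t hm
          rcases Finset.mem_union.1 this with h | h
          · exact hzlm.2 m h
          · exact hsupt_lt m h
        · rintro rfl
          exact (MvPolynomial.mem_support_iff.1 hm) hz2coeff
      have hrep2 : ∃ c2 : MvPolynomial σ ℚ → MvPolynomial σ ℚ,
          (∀ g', c2 g' ∈ polysOn X) ∧ z2 = ∑ g' ∈ GX, c2 g' * g' := by
        by_cases hz20 : z2 = 0
        · exact ⟨fun _ => 0, fun _ => polysOn_zero, by simp [hz20]⟩
        · refine ih (lm z2) ?_ z2 rfl hz2G hz2X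
          exact hz2supp (lm z2) (hlm z2 hz20).1
      obtain ⟨c2, hc2X, hc2⟩ := hrep2
      refine ⟨Function.update c2 g (c2 g + a • MvPolynomial.monomial d 1), ?_, ?_⟩
      · intro g'
        by_cases hgg : g' = g
        · subst hgg
          rw [Function.update_self]
          exact polysOn_add (hc2X g') (polysOn_smul (polysOn_monomial hgoodd 1))
        · rw [Function.update_of_ne hgg]
          exact hc2X g'
      · have hsum : ∑ g' ∈ GX, (Function.update c2 g (c2 g + a • MvPolynomial.monomial d 1)) g' * g'
            = ∑ g' ∈ GX, Function.update (fun x => c2 x * x) g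
                ((c2 g + a • MvPolynomial.monomial d 1) * g) g' := by
          apply Finset.sum_congr rfl
          intro x _
          by_cases hxg : x = g
          · subst hxg
            rw [Function.update_self, Function.update_self]
          · rw [Function.update_of_ne hxg, Function.update_of_ne hxg]
        rw [hsum, Finset.sum_update_of_mem hgGX]
        have e1 : ∑ x ∈ GX \ {g}, c2 x * x = z2 - c2 g * g := by
          rw [← Finset.erase_eq]
          have h2 := Finset.sum_erase_add GX (fun x => c2 x * x) hgGX
          rw [← hc2] at h2
          exact eq_sub_of_add_eq h2
        have e2 : t = (a • MvPolynomial.monomial d 1) * g := by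
          rw [ht, smul_mul_assoc]
        rw [e1, hz2, e2]
        ring
    intro z hzG hzX
    exact main (lm z) z rfl hzG hzX
  have hdiv_mod : ∀ z : MvPolynomial σ ℚ, z ∈ Ideal.span G → z ∈ polysOn X →
      z ∈ modGen (polysOn X) (G ∩ polysOn X) := by
    intro z hzG hzX
    obtain ⟨c, hcX, hc⟩ := hdiv z hzG hzX
    exact ⟨GX, c, by rw [hGX, Set.Finite.coe_toFinset], fun p _ => hcX p, hc⟩
  -- MAIN PROOF
  ext q
  constructor
  · rintro hq
    obtain ⟨av, hav, bv, hbv, rfl⟩ := Set.mem_add.1 hq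
    obtain ⟨hbcone, hbX⟩ := hbv
    obtain ⟨s, cfun, hsG, hcX, rfl⟩ := hav
    obtain ⟨sr, cr, hsrP, hcr0, rfl⟩ := hbcone
    have haG : (∑ p ∈ s, cfun p * p) ∈ Ideal.span G :=
      Ideal.sum_mem _ fun p hp =>
        Ideal.mul_mem_left _ _ (Ideal.subset_span (hsG hp).1)
    have haX : (∑ p ∈ s, cfun p * p) ∈ polysOn X :=
      polysOn_sum s _ fun p hp => polysOn_mul (hcX p hp) (hsG hp).2
    -- pick preimages
    have hex : ∀ r' : MvPolynomial σ ℚ, ∃ p, r' ∈ sr → p ∈ P ∧ red p = r' := by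
      intro r'
      by_cases h : r' ∈ sr
      · obtain ⟨p, hp1, hp2⟩ := hsrP h
        exact ⟨p, fun _ => ⟨hp1, hp2⟩⟩
      · exact ⟨0, fun hc => absurd hc h⟩
    choose pf hpf using hex
    set w : MvPolynomial σ ℚ := ∑ r' ∈ sr, cr r' • (pf r' - red (pf r')) with hw
    have hwG : w ∈ Ideal.span G := by
      refine Ideal.sum_mem _ fun r' _ => ?_
      rw [MvPolynomial.smul_eq_C_mul]
      exact Ideal.mul_mem_left _ _ (hred_sub (pf r'))
    have hbeq : ∑ r' ∈ sr, cr r' • r' = (∑ r' ∈ sr, cr r' • pf r') - w := by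
      rw [hw, ← Finset.sum_sub_distrib]
      refine Finset.sum_congr rfl fun r' hr' => ?_
      rw [smul_sub, (hpf r' hr').2]
      ring
    refine ⟨?_, ?_⟩
    · rw [Set.mem_add]
      refine ⟨(∑ p ∈ s, cfun p * p) - w, ?_, ∑ r' ∈ sr, cr r' • pf r', ?_, by
        rw [hbeq]; ring⟩
      · rw [SetLike.mem_coe, ← hG]
        exact Submodule.sub_mem _ haG hwG
      · refine ⟨sr.image pf, fun p => cr (red p), ?_, ?_, ?_⟩
        · intro p hp
          obtain ⟨r', hr', rfl⟩ := Finset.mem_image.1 hp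
          exact (hpf r' hr').1
        · intro p hp
          obtain ⟨r', hr', rfl⟩ := Finset.mem_image.1 hp
          simpa only [(hpf r' hr').2] using hcr0 r' hr'
        · have hinj : ∀ x ∈ sr, ∀ y ∈ sr, pf x = pf y → x = y := by
            intro x hx y hy hxy
            rw [← (hpf x hx).2, ← (hpf y hy).2, hxy]
          rw [Finset.sum_image hinj]
          refine Finset.sum_congr rfl fun r' hr' => ?_
          simp only [(hpf r' hr').2]
    · exact polysOn_add haX hbX
  · rintro ⟨hmem, hqX⟩
    obtain ⟨z0, hz0, p0, hp0, rfl⟩ := Set.mem_add.1 hmem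
    obtain ⟨s, c, hsP, hc0, rfl⟩ := hp0
    have hz0G : z0 ∈ Ideal.span G := by
      rw [hG]
      exact hz0
    set r : MvPolynomial σ ℚ := ∑ p ∈ s, c p • red p with hr
    have hprG : (∑ p ∈ s, c p • p) - r ∈ Ideal.span G := by
      rw [hr, ← Finset.sum_sub_distrib]
      refine Ideal.sum_mem _ fun p _ => ?_
      rw [← smul_sub, MvPolynomial.smul_eq_C_mul]
      exact Ideal.mul_mem_left _ _ (hred_sub p)
    have hwG : (z0 + ∑ p ∈ s, c p • p) - r ∈ Ideal.span G := by
      have : (z0 + ∑ p ∈ s, c p • p) - r = z0 + ((∑ p ∈ s, c p • p) - r) := by ring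
      rw [this]
      exact Submodule.add_mem _ hz0G hprG
    have hrred : ∀ m ∈ r.support, ∀ g ∈ G, g ≠ 0 → ¬ ∃ d, m = lm g + d := by
      intro m hm
      rw [hr] at hm
      obtain ⟨p, _, hm'⟩ := Finset.mem_biUnion.1 (MvPolynomial.support_sum hm)
      exact hred_reduced p m (MvPolynomial.support_smul hm')
    have hrX : r ∈ polysOn X := by
      refine maxlem ((z0 + ∑ p ∈ s, c p • p) - r) r ?_ hwG hrred
      rw [sub_add_cancel]
      exact hqX
    have hzmod : (z0 + ∑ p ∈ s, c p • p) - r ∈ modGen (polysOn X) (G ∩ polysOn X) :=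
      hdiv_mod _ hwG (polysOn_sub hqX hrX)
    have hrcone : r ∈ coneGen (red '' P) := by
      refine ⟨s.image red, fun r' => ∑ p ∈ s.filter (fun p => red p = r'), c p, ?_, ?_, ?_⟩
      · intro r' hr'
        obtain ⟨p, hp, rfl⟩ := Finset.mem_image.1 hr'
        exact ⟨p, hsP hp, rfl⟩
      · intro r' _
        exact Finset.sum_nonneg fun p hp => hc0 p (Finset.mem_filter.1 hp).1
      · rw [hr]
        rw [← Finset.sum_fiberwise_of_maps_to (fun p hp => Finset.mem_image_of_mem red hp)
          (fun p => c p • red p)]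
        refine Finset.sum_congr rfl fun r' _ => ?_
        rw [Finset.sum_smul]
        refine Finset.sum_congr rfl fun p hp => ?_
        rw [(Finset.mem_filter.1 hp).2]
    rw [Set.mem_add]
    exact ⟨(z0 + ∑ p ∈ s, c p • p) - r, hzmod, r, ⟨hrcone, hrX⟩, by rw [sub_add_cancel]⟩
end

section
/- Intersection via tagging: let Z1, P1, Z2, P2 ⊆ Q[X] be finite and t a fresh variable. Then (ideal(Z1)+cone(P1)) ∩ (ideal(Z2)+cone(P2)) = (ideal(t·Z1 ∪ (1−t)·Z2) + cone(t·P1 ∪ (1−t)·P2)) ∩ Q[X], where ideals and cones on the right are taken in Q[X ∪ {t}]. -/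
open MvPolynomial Pointwise

/-- Tagging: multiply each member of a set `S ⊆ ℚ[X]`, viewed inside
`ℚ[X ∪ {t}] = MvPolynomial (Option σ) ℚ` (with `t = X none`), by the polynomial `f`. -/
def tag {σ : Type} (f : MvPolynomial (Option σ) ℚ) (S : Set (MvPolynomial σ ℚ)) :
    Set (MvPolynomial (Option σ) ℚ) :=
  (fun s => f * rename (some : σ → Option σ) s) '' S

/-!
Every `q` in both `ideal(Z1) + cone(P1)` and `ideal(Z2) + cone(P2)` equals
`t·q + (1 - t)·q`, which lies in the tagged ideal plus the tagged cone. Conversely, substituting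
`t = 1` (resp. `t = 0`) is a `ℚ[X]`-algebra retraction sending one tag to `1` and the other to
`0`, so it maps the tagged ideal plus cone into `ideal(Z1) + cone(P1)` (resp. with index 2)
while fixing `q`.
-/

open PointedCone Submodule in
theorem coneGen_eq_hull {σ : Type} (P : Set (MvPolynomial σ ℚ)) :
    coneGen P = PointedCone.hull ℚ P := by
  ext q
  constructor
  · rintro ⟨s, c, hs, hc, rfl⟩
    exact sum_mem fun p hp ↦ (hull ℚ P).smul_mem (hc p hp) (subset_hull (hs hp))
  · intro hq
    obtain ⟨c, s, hs, -, rfl⟩ := mem_span_iff_exists_finset_subset.1 hq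
    exact ⟨s, fun p ↦ c p, hs, fun p _ ↦ (c p).2, rfl⟩

section Tagging

variable {σ : Type}

theorem mul_rename_mem_span_tag (f : MvPolynomial (Option σ) ℚ) {Z : Set (MvPolynomial σ ℚ)}
    {z : MvPolynomial σ ℚ} (hz : z ∈ Ideal.span Z) :
    f * rename some z ∈ Ideal.span (tag f Z) := by
  have h := Ideal.mul_mem_mul (Ideal.mem_span_singleton_self f)
    (Ideal.mem_map_of_mem (rename some) hz)
  rwa [Ideal.map_span, Ideal.span_mul_span', Set.singleton_mul, Set.image_image] at h

theorem mul_rename_mem_hull_tag (f : MvPolynomial (Option σ) ℚ) {P : Set (MvPolynomial σ ℚ)}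
    {p : MvPolynomial σ ℚ} (hp : p ∈ PointedCone.hull ℚ P) :
    f * rename some p ∈ PointedCone.hull ℚ (tag f P) :=
  (Submodule.span_le (p := (PointedCone.hull ℚ (tag f P)).comap
      (LinearMap.mulLeft ℚ f ∘ₗ (rename some).toLinearMap))).2
    (fun x hx ↦ PointedCone.subset_hull ⟨x, hx, rfl⟩) hp

variable {φ : MvPolynomial (Option σ) ℚ →ₐ[ℚ] MvPolynomial σ ℚ}
  {f g : MvPolynomial (Option σ) ℚ}

theorem map_mem_span_of_mem_span_tag (hφ : ∀ x, φ (rename some x) = x) (hg : φ g = 0)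
    {Z₁ Z₂ : Set (MvPolynomial σ ℚ)} {z : MvPolynomial (Option σ) ℚ}
    (hz : z ∈ Ideal.span (tag f Z₁ ∪ tag g Z₂)) : φ z ∈ Ideal.span Z₁ := by
  refine (Ideal.span_le (I := (Ideal.span Z₁).comap φ)).2 ?_ hz
  rintro _ (⟨w, hw, rfl⟩ | ⟨w, hw, rfl⟩) <;>
    simp only [SetLike.mem_coe, Ideal.mem_comap, map_mul, hφ, hg]
  · exact Ideal.mul_mem_left _ _ (Ideal.subset_span hw)
  · simp

theorem map_mem_hull_of_mem_hull_tag (hφ : ∀ x, φ (rename some x) = x) {a : ℚ}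
    (hf : φ f = C a) (ha : 0 ≤ a) (hg : φ g = 0)
    {P₁ P₂ : Set (MvPolynomial σ ℚ)} {p : MvPolynomial (Option σ) ℚ}
    (hp : p ∈ PointedCone.hull ℚ (tag f P₁ ∪ tag g P₂)) : φ p ∈ PointedCone.hull ℚ P₁ := by
  refine (Submodule.span_le (p := (PointedCone.hull ℚ P₁).comap φ.toLinearMap)).2 ?_ hp
  rintro _ (⟨w, hw, rfl⟩ | ⟨w, hw, rfl⟩) <;>
    simp only [SetLike.mem_coe, PointedCone.mem_comap, AlgHom.toLinearMap_apply, map_mul, hφ,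
      hf, hg]
  · rw [← smul_eq_C_mul]
    exact PointedCone.smul_mem _ ha (PointedCone.subset_hull hw)
  · simp

theorem mem_add_of_rename_mem_add_tag (hφ : ∀ x, φ (rename some x) = x) {a : ℚ}
    (hf : φ f = C a) (ha : 0 ≤ a) (hg : φ g = 0) {Z₁ Z₂ P₁ P₂ : Set (MvPolynomial σ ℚ)}
    {q : MvPolynomial σ ℚ}
    (hq : rename some q ∈ (Ideal.span (tag f Z₁ ∪ tag g Z₂) : Set (MvPolynomial (Option σ) ℚ)) +
      PointedCone.hull ℚ (tag f P₁ ∪ tag g P₂)) :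
    q ∈ (Ideal.span Z₁ : Set (MvPolynomial σ ℚ)) + PointedCone.hull ℚ P₁ := by
  obtain ⟨z, hz, p, hp, hzp⟩ := Set.mem_add.1 hq
  exact Set.mem_add.2 ⟨φ z, map_mem_span_of_mem_span_tag hφ hg hz, φ p,
    map_mem_hull_of_mem_hull_tag hφ hf ha hg hp, by rw [← map_add, hzp, hφ]⟩

end Tagging

theorem aeval_elim_rename_some {σ : Type} (a : ℚ) (x : MvPolynomial σ ℚ) :
    aeval (fun o : Option σ ↦ o.elim (C a) X) (rename some x) = x := by
  rw [aeval_rename]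
  exact aeval_X_left_apply x

theorem intersection_via_tagging_general {σ : Type}
    (Z1 P1 Z2 P2 : Set (MvPolynomial σ ℚ)) :
    ((↑(Ideal.span Z1) : Set (MvPolynomial σ ℚ)) + coneGen P1) ∩
        ((↑(Ideal.span Z2) : Set (MvPolynomial σ ℚ)) + coneGen P2) =
      {q : MvPolynomial σ ℚ |
        rename (some : σ → Option σ) q ∈
          (↑(Ideal.span
              (tag (MvPolynomial.X (none : Option σ)) Z1 ∪
               tag (1 - MvPolynomial.X (none : Option σ)) Z2)) :
                Set (MvPolynomial (Option σ) ℚ)) +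
            coneGen
              (tag (MvPolynomial.X (none : Option σ)) P1 ∪
               tag (1 - MvPolynomial.X (none : Option σ)) P2)} := by
  set t : MvPolynomial (Option σ) ℚ := X none
  simp only [coneGen_eq_hull]
  ext q
  constructor
  · rintro ⟨h₁, h₂⟩
    obtain ⟨z₁, hz₁, p₁, hp₁, rfl⟩ := Set.mem_add.1 h₁
    obtain ⟨z₂, hz₂, p₂, hp₂, hsum⟩ := Set.mem_add.1 h₂
    refine Set.mem_add.2 ⟨t * rename some z₁ + (1 - t) * rename some z₂,
      add_mem (Ideal.span_mono Set.subset_union_left (mul_rename_mem_span_tag t hz₁))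
        (Ideal.span_mono Set.subset_union_right (mul_rename_mem_span_tag (1 - t) hz₂)),
      t * rename some p₁ + (1 - t) * rename some p₂,
      add_mem (Submodule.span_mono Set.subset_union_left (mul_rename_mem_hull_tag t hp₁))
        (Submodule.span_mono Set.subset_union_right (mul_rename_mem_hull_tag (1 - t) hp₂)), ?_⟩
    calc _ = t * rename some (z₁ + p₁) + (1 - t) * rename some (z₂ + p₂) := by
          simp only [map_add]; ring
      _ = rename some (z₁ + p₁) := by rw [hsum]; ring
  · intro hq
    refine ⟨mem_add_of_rename_mem_add_tag (f := t) (a := 1) (aeval_elim_rename_some 1)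
        (by simp [t]) zero_le_one (by simp [t]) hq, ?_⟩
    rw [Set.union_comm (tag t Z1), Set.union_comm (tag t P1)] at hq
    exact mem_add_of_rename_mem_add_tag (f := 1 - t) (a := 1) (aeval_elim_rename_some 0)
      (by simp [t]) zero_le_one (by simp [t]) hq

/-- intersection via tagging: let `Z1, P1, Z2, P2 ⊆ ℚ[X]` be finite and
`t` a fresh variable.  Then
`(ideal(Z1)+cone(P1)) ∩ (ideal(Z2)+cone(P2))
  = (ideal(t·Z1 ∪ (1−t)·Z2) + cone(t·P1 ∪ (1−t)·P2)) ∩ ℚ[X]`,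
where the ideals and cones on the right are taken in `ℚ[X ∪ {t}]`. -/
theorem intersection_via_tagging {σ : Type}
    (Z1 P1 Z2 P2 : Set (MvPolynomial σ ℚ))
    (hZ1 : Z1.Finite) (hP1 : P1.Finite) (hZ2 : Z2.Finite) (hP2 : P2.Finite) :
    ((↑(Ideal.span Z1) : Set (MvPolynomial σ ℚ)) + coneGen P1) ∩
        ((↑(Ideal.span Z2) : Set (MvPolynomial σ ℚ)) + coneGen P2) =
      {q : MvPolynomial σ ℚ |
        rename (some : σ → Option σ) q ∈
          (↑(Ideal.span
              (tag (MvPolynomial.X (none : Option σ)) Z1 ∪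
               tag (1 - MvPolynomial.X (none : Option σ)) Z2)) :
                Set (MvPolynomial (Option σ) ℚ)) +
            coneGen
              (tag (MvPolynomial.X (none : Option σ)) P1 ∪
               tag (1 - MvPolynomial.X (none : Option σ)) P2)} :=
  intersection_via_tagging_general Z1 P1 Z2 P2
end

section
/- Tagging substitution lemma: let X be a set of variables, t ∉ X, Z, P ⊆ Q[X] finite, f ∈ Q[t], and a ∈ Q with f(a) ≥ 0. Then for every q in the algebraic cone ideal(fZ) + cone(fP) of Q[X ∪ {t}], the substitution q[t ↦ a] lies in ideal(Z) + cone(P) in Q[X]. -/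
open MvPolynomial Pointwise

lemma coneGen_zero' {σ : Type} (P : Set (MvPolynomial σ ℚ)) :
    (0 : MvPolynomial σ ℚ) ∈ coneGen P :=
  ⟨∅, 0, by simp, by simp, by simp⟩

lemma coneGen_add' {σ : Type} {P : Set (MvPolynomial σ ℚ)} {x y : MvPolynomial σ ℚ}
    (hx : x ∈ coneGen P) (hy : y ∈ coneGen P) : x + y ∈ coneGen P := by
  classical
  obtain ⟨s1, c1, hs1, hc1, rfl⟩ := hx
  obtain ⟨s2, c2, hs2, hc2, rfl⟩ := hy
  refine ⟨s1 ∪ s2, fun p => (if p ∈ s1 then c1 p else 0) + (if p ∈ s2 then c2 p else 0),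
    ?_, ?_, ?_⟩
  · intro p hp
    rcases Finset.mem_union.mp hp with h | h
    exacts [hs1 h, hs2 h]
  · intro p _
    apply add_nonneg <;> split <;> first | exact hc1 _ ‹_› | exact hc2 _ ‹_› | exact le_rfl
  · simp only [add_smul, Finset.sum_add_distrib, ite_smul, zero_smul, Finset.sum_ite_mem,
      Finset.union_inter_cancel_left, Finset.union_inter_cancel_right]

lemma coneGen_smul_mem' {σ : Type} {P : Set (MvPolynomial σ ℚ)} {p : MvPolynomial σ ℚ}
    (hp : p ∈ P) {r : ℚ} (hr : 0 ≤ r) : r • p ∈ coneGen P :=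
  ⟨{p}, fun _ => r, by simpa using hp, fun _ _ => hr, by simp⟩

lemma phi_gen {σ : Type} (f : Polynomial ℚ) (a : ℚ) (z : MvPolynomial σ ℚ) :
    MvPolynomial.aeval (fun o : Option σ => o.elim (MvPolynomial.C a) MvPolynomial.X)
      (Polynomial.aeval (MvPolynomial.X (none : Option σ)) f * rename (some : σ → Option σ) z)
      = MvPolynomial.C (f.eval a) * z := by
  rw [map_mul]
  congr 1
  · rw [← Polynomial.aeval_algHom_apply]
    simp only [aeval_X, Option.elim]
    rw [show (MvPolynomial.C a : MvPolynomial σ ℚ) = algebraMap ℚ _ a from rfl,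
      Polynomial.aeval_algebraMap_apply]
    simp [Polynomial.aeval_def]
  · rw [aeval_rename]
    simp [Function.comp_def]

/-- tagging substitution lemma: let `X` be a set of variables and `t ∉ X` a
fresh variable (so `ℚ[X ∪ {t}]` is modeled as `MvPolynomial (Option σ) ℚ` with
`t = X none`).  Let `Z, P ⊆ ℚ[X]` be finite, `f ∈ ℚ[t]` a univariate polynomial, and
`a ∈ ℚ` with `f(a) ≥ 0`.  Then for every `q` in the algebraic cone
`ideal(f·Z) + cone(f·P)` of `ℚ[X ∪ {t}]`, the substitution `q[t ↦ a]` lies in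
`ideal(Z) + cone(P)` in `ℚ[X]`. -/
theorem tagging_substitution_lemma {σ : Type}
    (Z P : Set (MvPolynomial σ ℚ)) (hZ : Z.Finite) (hP : P.Finite)
    (f : Polynomial ℚ) (a : ℚ) (hfa : 0 ≤ f.eval a) :
    ∀ q : MvPolynomial (Option σ) ℚ,
      q ∈ (↑(Ideal.span
              ((fun z => Polynomial.aeval (MvPolynomial.X (none : Option σ)) f *
                  rename (some : σ → Option σ) z) '' Z)) : Set (MvPolynomial (Option σ) ℚ)) +
            coneGen ((fun p => Polynomial.aeval (MvPolynomial.X (none : Option σ)) f *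
                rename (some : σ → Option σ) p) '' P) →
      MvPolynomial.aeval (fun o : Option σ => o.elim (MvPolynomial.C a) MvPolynomial.X) q ∈
        (↑(Ideal.span Z) : Set (MvPolynomial σ ℚ)) + coneGen P := by
  intro q hq
  rw [Set.mem_add] at hq
  obtain ⟨i, hi, c, hc, rfl⟩ := hq
  set φ : MvPolynomial (Option σ) ℚ →ₐ[ℚ] MvPolynomial σ ℚ :=
    MvPolynomial.aeval (fun o : Option σ => o.elim (MvPolynomial.C a) MvPolynomial.X) with hφ
  rw [map_add]
  rw [Set.mem_add]
  refine ⟨φ i, ?_, φ c, ?_, rfl⟩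
  · -- ideal part
    have h1 : φ i ∈ Ideal.map φ (Ideal.span
        ((fun z => Polynomial.aeval (MvPolynomial.X (none : Option σ)) f *
            rename (some : σ → Option σ) z) '' Z)) := Ideal.mem_map_of_mem _ hi
    rw [Ideal.map_span] at h1
    refine Ideal.span_le.mpr ?_ h1
    rintro x ⟨y, ⟨z, hz, rfl⟩, rfl⟩
    show φ _ ∈ Ideal.span Z
    rw [hφ, phi_gen]
    exact Ideal.mul_mem_left _ _ (Ideal.subset_span hz)
  · -- cone part
    obtain ⟨s, cf, hs, hcf, rfl⟩ := hc
    rw [map_sum]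
    refine Finset.sum_induction _ (· ∈ coneGen P) (fun _ _ => coneGen_add')
      (coneGen_zero' P) ?_
    intro p hp
    obtain ⟨p', hp', rfl⟩ := hs hp
    rw [map_smul, hφ, phi_gen, ← MvPolynomial.smul_eq_C_mul, smul_smul]
    exact coneGen_smul_mem' hp' (mul_nonneg (hcf _ hp) hfa)
end

section
/- Reduction of cutting-plane closure to finite dimension: let B = {b1,...,bk} ⊆ Q[X], C ⊆ Q[X] a cone, Y = {y1,...,yk} fresh variables, and f : Lin(Y) → Q[X] the linear map sending a0 + a1 y1 + ... + ak yk to a0 + a1 b1 + ... + ak bk. Then cp_{ZB}(C) = C + f(cp_{ZY}(f^{-1}(C))), where ZB is the integer span of B and ZY the integer span of Y. -/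
open MvPolynomial Pointwise

/-- `D` is closed under cutting planes with respect to `L`. -/
def ClosedCP {σ : Type} (L D : Set (MvPolynomial σ ℚ)) : Prop :=
  ∀ (a b : ℤ), 0 < a → ∀ p ∈ L,
    a • p + (b : MvPolynomial σ ℚ) ∈ D →
      p + ((⌊(b : ℚ) / (a : ℚ)⌋ : ℤ) : MvPolynomial σ ℚ) ∈ D

/-- `cp_L(C)`: the least cone containing `C` closed under cutting planes w.r.t. `L`. -/
def cpClosure {σ : Type} (L C : Set (MvPolynomial σ ℚ)) : Set (MvPolynomial σ ℚ) :=
  ⋂₀ {D | IsCone D ∧ C ⊆ D ∧ ClosedCP L D}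

/-! Write `f = aeval B`. Since `f` maps `ℤY` onto `ℤB` and `f⁻¹(C)` into `C`, the preimage under `f`
of `cp_{ℤB}(C)` is a cut-closed cone containing `f⁻¹(C)`, which gives `⊇`. For `⊆` it suffices that
`C + f(cp_{ℤY}(f⁻¹(C)))` is closed under cuts along `ℤB`. Every element of `cp_{ℤY}(f⁻¹(C))` is
affine, the affine polynomials being a subspace containing `ℤY` and the constants. So if
`a f(p) + b = c + f(q)` with `c ∈ C` and `q` in that closure, then `r = a p + b - q` is affine with
`f(r) = c`, i.e. `r ∈ f⁻¹(C)`; hence `a p + b = q + r` lies in the closure, the cut can be made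
there, and `f` carries the result back. -/

section

open Set

variable {σ τ : Type}

theorem isCone_cpClosure (L C : Set (MvPolynomial σ ℚ)) : IsCone (cpClosure L C) :=
  ⟨mem_sInter.2 fun _ hD => hD.1.1,
    fun _ hx _ hy => mem_sInter.2 fun D hD =>
      hD.1.2.1 _ (mem_sInter.1 hx D hD) _ (mem_sInter.1 hy D hD),
    fun a ha _ hx => mem_sInter.2 fun D hD => hD.1.2.2 a ha _ (mem_sInter.1 hx D hD)⟩

theorem subset_cpClosure (L C : Set (MvPolynomial σ ℚ)) : C ⊆ cpClosure L C :=
  fun _ hx => mem_sInter.2 fun _ hD => hD.2.1 hx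

theorem closedCP_cpClosure (L C : Set (MvPolynomial σ ℚ)) : ClosedCP L (cpClosure L C) :=
  fun a b ha p hp h => mem_sInter.2 fun D hD => hD.2.2 a b ha p hp (mem_sInter.1 h D hD)

theorem cpClosure_subset {L C D : Set (MvPolynomial σ ℚ)} (hD : IsCone D) (hCD : C ⊆ D)
    (hLD : ClosedCP L D) : cpClosure L C ⊆ D :=
  sInter_subset_of_mem ⟨hD, hCD, hLD⟩

theorem IsCone.add {C D : Set (MvPolynomial σ ℚ)} (hC : IsCone C) (hD : IsCone D) :
    IsCone (C + D) := by
  refine ⟨⟨0, hC.1, 0, hD.1, zero_add 0⟩, ?_, ?_⟩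
  · rintro _ ⟨c, hc, d, hd, rfl⟩ _ ⟨c', hc', d', hd', rfl⟩
    exact ⟨c + c', hC.2.1 c hc c' hc', d + d', hD.2.1 d hd d' hd', add_add_add_comm c c' d d'⟩
  · rintro a ha _ ⟨c, hc, d, hd, rfl⟩
    exact ⟨a • c, hC.2.2 a ha c hc, a • d, hD.2.2 a ha d hd, (smul_add a c d).symm⟩

section LinearMap

variable {F : Type} [FunLike F (MvPolynomial τ ℚ) (MvPolynomial σ ℚ)]
  [LinearMapClass F ℚ (MvPolynomial τ ℚ) (MvPolynomial σ ℚ)] (g : F)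

theorem IsCone.image {D : Set (MvPolynomial τ ℚ)} (hD : IsCone D) : IsCone (g '' D) := by
  refine ⟨⟨0, hD.1, map_zero g⟩, ?_, ?_⟩
  · rintro _ ⟨x, hx, rfl⟩ _ ⟨y, hy, rfl⟩
    exact ⟨x + y, hD.2.1 x hx y hy, map_add g x y⟩
  · rintro a ha _ ⟨x, hx, rfl⟩
    exact ⟨a • x, hD.2.2 a ha x hx, map_smul g a x⟩

theorem IsCone.preimage {D : Set (MvPolynomial σ ℚ)} (hD : IsCone D) : IsCone (g ⁻¹' D) :=
  ⟨by simpa only [mem_preimage, map_zero] using hD.1,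
    fun x hx y hy => by simpa only [mem_preimage, map_add] using hD.2.1 _ hx _ hy,
    fun a ha x hx => by simpa only [mem_preimage, map_smul] using hD.2.2 a ha _ hx⟩

end LinearMap

theorem ClosedCP.preimage {F : Type} [FunLike F (MvPolynomial τ ℚ) (MvPolynomial σ ℚ)]
    [RingHomClass F (MvPolynomial τ ℚ) (MvPolynomial σ ℚ)] (g : F)
    {L' : Set (MvPolynomial τ ℚ)} {L D : Set (MvPolynomial σ ℚ)} (hL : MapsTo g L' L)
    (hD : ClosedCP L D) : ClosedCP L' (g ⁻¹' D) := by
  intro a b ha p hp h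
  simp only [mem_preimage, map_add, map_zsmul, map_intCast] at h ⊢
  exact hD a b ha (g p) (hL hp) h

theorem Submodule.isCone (V : Submodule ℚ (MvPolynomial σ ℚ)) :
    IsCone (V : Set (MvPolynomial σ ℚ)) :=
  ⟨V.zero_mem, fun _ hx _ hy => V.add_mem hx hy, fun a _ _ hx => V.smul_mem a hx⟩

theorem Submodule.intCast_mem_of_one_mem {V : Submodule ℚ (MvPolynomial σ ℚ)} (h1V : 1 ∈ V)
    (n : ℤ) : (n : MvPolynomial σ ℚ) ∈ V :=
  zsmul_one (R := MvPolynomial σ ℚ) n ▸ zsmul_mem h1V n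

theorem Submodule.closedCP {L : Set (MvPolynomial σ ℚ)} {V : Submodule ℚ (MvPolynomial σ ℚ)}
    (hLV : L ⊆ V) (h1V : 1 ∈ V) : ClosedCP L V :=
  fun _ _ _ _ hp _ => V.add_mem (hLV hp) (V.intCast_mem_of_one_mem h1V _)

theorem cpClosure_subset_submodule {L C : Set (MvPolynomial σ ℚ)}
    {V : Submodule ℚ (MvPolynomial σ ℚ)} (hLV : L ⊆ V) (h1V : 1 ∈ V) (hCV : C ⊆ V) :
    cpClosure L C ⊆ V :=
  cpClosure_subset V.isCone hCV (Submodule.closedCP hLV h1V)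

theorem image_cpClosure_subset (g : MvPolynomial τ ℚ →ₐ[ℚ] MvPolynomial σ ℚ)
    {L' C' : Set (MvPolynomial τ ℚ)} {L C : Set (MvPolynomial σ ℚ)} (hL : MapsTo g L' L)
    (hC : MapsTo g C' C) : g '' cpClosure L' C' ⊆ cpClosure L C :=
  image_subset_iff.2 <| cpClosure_subset ((isCone_cpClosure L C).preimage g)
    (hC.mono_right (subset_cpClosure L C)) ((closedCP_cpClosure L C).preimage g hL)

theorem closedCP_add_image_cpClosure (g : MvPolynomial τ ℚ →ₐ[ℚ] MvPolynomial σ ℚ)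
    {L : Set (MvPolynomial τ ℚ)} {C : Set (MvPolynomial σ ℚ)}
    {V : Submodule ℚ (MvPolynomial τ ℚ)} (hC : (0 : MvPolynomial σ ℚ) ∈ C) (hLV : L ⊆ V)
    (h1V : 1 ∈ V) : ClosedCP (g '' L) (C + g '' cpClosure L {p | p ∈ V ∧ g p ∈ C}) := by
  set C' := {p | p ∈ V ∧ g p ∈ C}
  rintro a b ha _ ⟨p, hp, rfl⟩ h
  obtain ⟨c, hc, _, ⟨q, hq, rfl⟩, hcq⟩ := mem_add.1 h
  have hr : a • p + (b : MvPolynomial τ ℚ) - q ∈ C' := by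
    refine ⟨V.sub_mem ?_ (cpClosure_subset_submodule hLV h1V (fun _ hp => hp.1) hq), ?_⟩
    · exact V.add_mem (zsmul_mem (hLV hp) a) (V.intCast_mem_of_one_mem h1V b)
    · rwa [map_sub, map_add, map_zsmul, map_intCast, ← hcq, add_sub_cancel_right]
  have hpb : a • p + (b : MvPolynomial τ ℚ) ∈ cpClosure L C' := by
    simpa only [add_sub_cancel] using (isCone_cpClosure L C').2.1 q hq _ (subset_cpClosure L C' hr)
  refine mem_add.2 ⟨0, hC, _, ⟨_, closedCP_cpClosure L C' a b ha p hp hpb, rfl⟩, ?_⟩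
  rw [zero_add, map_add, map_intCast]

theorem cpClosure_image_eq_add_image_cpClosure (g : MvPolynomial τ ℚ →ₐ[ℚ] MvPolynomial σ ℚ)
    {L : Set (MvPolynomial τ ℚ)} {C : Set (MvPolynomial σ ℚ)} (hC : IsCone C)
    (V : Submodule ℚ (MvPolynomial τ ℚ)) (hLV : L ⊆ V) (h1V : 1 ∈ V) :
    cpClosure (g '' L) C = C + g '' cpClosure L {p | p ∈ V ∧ g p ∈ C} := by
  set C' := {p | p ∈ V ∧ g p ∈ C}
  refine (cpClosure_subset (hC.add ((isCone_cpClosure L C').image g))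
    (subset_add_left C ⟨0, (isCone_cpClosure L C').1, map_zero g⟩)
    (closedCP_add_image_cpClosure g hC.1 hLV h1V)).antisymm ?_
  exact add_subset_iff.2 fun x hx y hy => (isCone_cpClosure _ _).2.1 x (subset_cpClosure _ _ hx)
    y (image_cpClosure_subset g (mapsTo_image g L) (fun _ hp => hp.2) hy)

theorem image_aeval_intSpan_X {ι : Type} [Fintype ι] (B : ι → MvPolynomial σ ℚ) :
    aeval B '' {p : MvPolynomial ι ℚ | ∃ c : ι → ℤ, p = ∑ i, c i • X i} =
      {q | ∃ c : ι → ℤ, q = ∑ i, c i • B i} := by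
  ext q
  constructor
  · rintro ⟨_, ⟨c, rfl⟩, rfl⟩
    exact ⟨c, by simp only [map_sum, map_zsmul, aeval_X]⟩
  · rintro ⟨c, rfl⟩
    exact ⟨_, ⟨c, rfl⟩, by simp only [map_sum, map_zsmul, aeval_X]⟩

end

theorem cp_closure_reduction_to_finite_dim_general {σ : Type}
    (k : ℕ) (B : Fin k → MvPolynomial σ ℚ)
    (C : Set (MvPolynomial σ ℚ)) (hC : IsCone C) :
    cpClosure {q : MvPolynomial σ ℚ | ∃ c : Fin k → ℤ, q = ∑ i, c i • B i} C =
      C +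
        (fun p : MvPolynomial (Fin k) ℚ => MvPolynomial.aeval B p) ''
          cpClosure
            {p : MvPolynomial (Fin k) ℚ | ∃ c : Fin k → ℤ, p = ∑ i, c i • MvPolynomial.X i}
            {p : MvPolynomial (Fin k) ℚ |
              p.totalDegree ≤ 1 ∧ MvPolynomial.aeval B p ∈ C} := by
  have hLV : {p : MvPolynomial (Fin k) ℚ | ∃ c : Fin k → ℤ, p = ∑ i, c i • X i} ⊆
      restrictTotalDegree (Fin k) ℚ 1 := by
    rintro _ ⟨c, rfl⟩
    exact Submodule.sum_mem _ fun i _ =>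
      zsmul_mem ((mem_restrictTotalDegree _ _ _).2 (totalDegree_X i).le) _
  have h1V : (1 : MvPolynomial (Fin k) ℚ) ∈ restrictTotalDegree (Fin k) ℚ 1 :=
    (mem_restrictTotalDegree _ _ _).2 (by rw [totalDegree_one]; exact zero_le_one)
  rw [← image_aeval_intSpan_X, cpClosure_image_eq_add_image_cpClosure (aeval B) hC _ hLV h1V]
  simp only [mem_restrictTotalDegree]

/-- reduction of cutting-plane closure to finite dimension: let
`B = {b₁,…,b_k} ⊆ ℚ[X]`, `C ⊆ ℚ[X]` a cone, `Y = {y₁,…,y_k}` fresh variables, and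
`f : Lin(Y) → ℚ[X]` the linear map sending `a₀ + a₁y₁ + … + a_k y_k` to
`a₀ + a₁b₁ + … + a_k b_k` (i.e. the restriction of `aeval B` to polynomials of degree
at most one).  Then `cp_{ℤB}(C) = C + f(cp_{ℤY}(f⁻¹(C)))`, where `ℤB` is the integer
span of `B` and `ℤY` the integer span of `Y`, and
`f⁻¹(C) = {p ∈ Lin(Y) : f(p) ∈ C}`. -/
theorem cp_closure_reduction_to_finite_dim {σ : Type} [Fintype σ]
    (k : ℕ) (B : Fin k → MvPolynomial σ ℚ)
    (C : Set (MvPolynomial σ ℚ)) (hC : IsCone C) :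
    cpClosure {q : MvPolynomial σ ℚ | ∃ c : Fin k → ℤ, q = ∑ i, c i • B i} C =
      C +
        (fun p : MvPolynomial (Fin k) ℚ => MvPolynomial.aeval B p) ''
          cpClosure
            {p : MvPolynomial (Fin k) ℚ | ∃ c : Fin k → ℤ, p = ∑ i, c i • MvPolynomial.X i}
            {p : MvPolynomial (Fin k) ℚ |
              p.totalDegree ≤ 1 ∧ MvPolynomial.aeval B p ∈ C} :=
  cp_closure_reduction_to_finite_dim_general k B C hC
end

section
/- Inverse image of an algebraic cone under a ring homomorphism: let X, Y be disjoint finite variable sets, Z ⊆ Q[X] a Gröbner basis, P ⊆ Q[X] finite, and f : Q[Y] → Q[X] a ring homomorphism. Then f^{-1}(ideal(Z)+cone(P)) = (ideal({y − f(y) : y ∈ Y} ∪ Z) + cone(P)) ∩ Q[Y], where the right-hand ideal and cone live in Q[X ∪ Y]. -/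
open MvPolynomial Pointwise

lemma coneGen_image {σ τ : Type} (G : MvPolynomial σ ℚ →ₐ[ℚ] MvPolynomial τ ℚ)
    (P : Set (MvPolynomial σ ℚ)) {c : MvPolynomial σ ℚ} (hc : c ∈ coneGen P) :
    G c ∈ coneGen (G '' P) := by
  classical
  obtain ⟨s, co, hsP, hco, rfl⟩ := hc
  refine ⟨s.image G, fun q => ∑ p ∈ s.filter (fun p => G p = q), co p, ?_, ?_, ?_⟩
  · intro q hq
    simp only [Finset.coe_image, Set.mem_image, Finset.mem_coe] at hq
    obtain ⟨p, hp, rfl⟩ := hq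
    exact ⟨p, hsP hp, rfl⟩
  · intro p _
    exact Finset.sum_nonneg fun x hx => hco x (Finset.mem_filter.1 hx).1
  · rw [map_sum]
    simp only [map_smul]
    rw [Finset.sum_image' (fun p => co p • G p)]
    intro p hp
    rw [Finset.sum_smul]
    apply Finset.sum_congr rfl
    intro x hx
    rw [(Finset.mem_filter.1 hx).2]

/-- inverse image of an algebraic cone under a ring homomorphism: let
`X`, `Y` be disjoint finite variable sets (types `τX`, `τY`, with `ℚ[X ∪ Y]` modeled as
`MvPolynomial (τX ⊕ τY) ℚ`), `Z ⊆ ℚ[X]` a Gröbner basis (with respect to a monomial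
order `mo` with leading-monomial map `lm`), `P ⊆ ℚ[X]` finite, and
`f : ℚ[Y] → ℚ[X]` a ring homomorphism.  Then
`f⁻¹(ideal(Z)+cone(P)) = (ideal({y − f(y) : y ∈ Y} ∪ Z) + cone(P)) ∩ ℚ[Y]`,
where the right-hand ideal and cone live in `ℚ[X ∪ Y]`. -/
theorem inverse_image_of_algebraic_cone {τX τY : Type} [Fintype τX] [Fintype τY]
    (mo : (τX →₀ ℕ) → (τX →₀ ℕ) → Prop)
    (mo_total : ∀ m n, mo m n ∨ mo n m)
    (mo_antisymm : ∀ m n, mo m n → mo n m → m = n)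
    (mo_trans : ∀ m n k, mo m n → mo n k → mo m k)
    (mo_add : ∀ m n k, mo m n → mo (m + k) (n + k))
    (mo_bot : ∀ m, mo 0 m)
    (lm : MvPolynomial τX ℚ → (τX →₀ ℕ))
    (hlm : ∀ p : MvPolynomial τX ℚ, p ≠ 0 →
      lm p ∈ p.support ∧ ∀ m ∈ p.support, mo m (lm p))
    (Z P : Set (MvPolynomial τX ℚ)) (hZfin : Z.Finite) (hPfin : P.Finite)
    -- `Z` is a Gröbner basis w.r.t. `mo`
    (hGB : ∀ q ∈ Ideal.span Z, q ≠ 0 → ∃ g ∈ Z, g ≠ 0 ∧ ∃ d, lm q = lm g + d)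
    (f : MvPolynomial τY ℚ →+* MvPolynomial τX ℚ) :
    {q : MvPolynomial τY ℚ |
        f q ∈ (↑(Ideal.span Z) : Set (MvPolynomial τX ℚ)) + coneGen P} =
      {q : MvPolynomial τY ℚ |
        rename (Sum.inr : τY → τX ⊕ τY) q ∈
          (↑(Ideal.span
              ((Set.range fun y : τY =>
                  MvPolynomial.X (Sum.inr y : τX ⊕ τY) -
                    rename (Sum.inl : τX → τX ⊕ τY) (f (MvPolynomial.X y))) ∪
                (rename (Sum.inl : τX → τX ⊕ τY) '' Z))) :
              Set (MvPolynomial (τX ⊕ τY) ℚ)) +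
            coneGen (rename (Sum.inl : τX → τX ⊕ τY) '' P)} := by
  -- f as an algebra hom
  have fC : ∀ a : ℚ, f (C a) = C a := by
    intro a
    have : f.comp (algebraMap ℚ (MvPolynomial τY ℚ)) = algebraMap ℚ (MvPolynomial τX ℚ) :=
      Subsingleton.elim _ _
    simpa [MvPolynomial.algebraMap_eq] using RingHom.congr_fun this a
  let f' : MvPolynomial τY ℚ →ₐ[ℚ] MvPolynomial τX ℚ :=
    { f with commutes' := fun r => by simpa [MvPolynomial.algebraMap_eq] using fC r }
  have f'eq : ∀ q, f' q = f q := fun q => rfl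
  -- evaluation hom back
  let F : MvPolynomial (τX ⊕ τY) ℚ →ₐ[ℚ] MvPolynomial τX ℚ :=
    aeval (Sum.elim X (fun y => f (X y)))
  have hFl : ∀ p : MvPolynomial τX ℚ, F (rename Sum.inl p) = p := by
    intro p
    have h1 : F (rename Sum.inl p) =
        aeval ((Sum.elim X fun y => f (X y)) ∘ Sum.inl) p := aeval_rename _ _ _
    rw [h1]
    exact aeval_X_left_apply p
  have hFr : ∀ q : MvPolynomial τY ℚ, F (rename Sum.inr q) = f q := by
    intro q
    have h1 : F (rename Sum.inr q) =
        aeval ((Sum.elim X fun y => f (X y)) ∘ Sum.inr) q := aeval_rename _ _ _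
    exact h1.trans (DFunLike.congr_fun (MvPolynomial.aeval_unique f').symm q)
  -- the "difference" ideal membership
  set D : Set (MvPolynomial (τX ⊕ τY) ℚ) :=
    Set.range fun y : τY =>
      X (Sum.inr y : τX ⊕ τY) - rename (Sum.inl : τX → τX ⊕ τY) (f (X y)) with hD
  have hdiff : ∀ q : MvPolynomial τY ℚ,
      rename (Sum.inr : τY → τX ⊕ τY) q - rename Sum.inl (f q) ∈ Ideal.span D := by
    intro q
    induction q using MvPolynomial.induction_on with
    | C a => simp [fC]
    | add p q hp hq =>
        have : rename (Sum.inr : τY → τX ⊕ τY) (p + q) - rename Sum.inl (f (p + q)) =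
            (rename Sum.inr p - rename Sum.inl (f p)) +
            (rename Sum.inr q - rename Sum.inl (f q)) := by
          simp [map_add]; ring
        rw [this]; exact Ideal.add_mem _ hp hq
    | mul_X p n hp =>
        have key : rename (Sum.inr : τY → τX ⊕ τY) (p * X n) - rename Sum.inl (f (p * X n)) =
            rename Sum.inr p * (X (Sum.inr n) - rename Sum.inl (f (X n))) +
            (rename Sum.inr p - rename Sum.inl (f p)) * rename Sum.inl (f (X n)) := by
          simp [map_mul]; ring
        rw [key]
        exact Ideal.add_mem _
          (Ideal.mul_mem_left _ _ (Ideal.subset_span ⟨n, rfl⟩))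
          (Ideal.mul_mem_right _ _ hp)
  ext q
  simp only [Set.mem_setOf_eq, Set.mem_add, SetLike.mem_coe]
  constructor
  · rintro ⟨a, ha, b, hb, hab⟩
    refine ⟨(rename (Sum.inr : τY → τX ⊕ τY) q - rename Sum.inl (f q)) + rename Sum.inl a,
      ?_, rename Sum.inl b, ?_, ?_⟩
    · apply Ideal.add_mem
      · exact Ideal.span_mono Set.subset_union_left (hdiff q)
      · apply Ideal.span_mono Set.subset_union_right
        have := Ideal.mem_map_of_mem (rename (Sum.inl : τX → τX ⊕ τY)).toRingHom ha
        rwa [Ideal.map_span] at this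
    · exact coneGen_image (rename (Sum.inl : τX → τX ⊕ τY)) P hb
    · rw [← hab]; simp [map_add]; ring
  · rintro ⟨a, ha, b, hb, hab⟩
    have hF : f q = F a + F b := by
      rw [← hFr q, ← hab, map_add]
    refine ⟨F a, ?_, F b, ?_, hF.symm⟩
    · have hmap := Ideal.mem_map_of_mem F.toRingHom ha
      rw [Ideal.map_span] at hmap
      have hsub : (F.toRingHom : MvPolynomial (τX ⊕ τY) ℚ → MvPolynomial τX ℚ) ''
          (D ∪ (rename (Sum.inl : τX → τX ⊕ τY) '' Z)) ⊆ insert 0 Z := by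
        rintro _ ⟨x, hx, rfl⟩
        rcases hx with ⟨y, rfl⟩ | ⟨z, hz, rfl⟩
        · left
          simp only [AlgHom.toRingHom_eq_coe, RingHom.coe_coe, map_sub]
          rw [hFl]
          simp [F]
        · right
          simp only [AlgHom.toRingHom_eq_coe, RingHom.coe_coe]
          rw [hFl]
          exact hz
      have hle : Ideal.span ((F.toRingHom :
          MvPolynomial (τX ⊕ τY) ℚ → MvPolynomial τX ℚ) ''
          (D ∪ (rename (Sum.inl : τX → τX ⊕ τY) '' Z))) ≤ Ideal.span Z := by
        have hz0 : Ideal.span (insert (0 : MvPolynomial τX ℚ) Z) = Ideal.span Z :=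
          Submodule.span_insert_zero
        exact le_trans (Ideal.span_mono hsub) (le_of_eq hz0)
      exact hle hmap
    · have := coneGen_image F _ hb
      rwa [Set.image_image, show (fun x : MvPolynomial τX ℚ => F (rename (Sum.inl : τX → τX ⊕ τY) x)) = (id : MvPolynomial τX ℚ → MvPolynomial τX ℚ) from
        by funext x; rw [hFl x]; rfl, Set.image_id] at this
end

section
/- Soundness of the transitive-closure summary for a single recurrence: let F be a transition formula over variables X ∪ X' modulo LIRR, r a linear term over X with primed copy r', and a a polynomial over X such that F entails both r' ≤ r + a and a' = a. Then for every natural number m, the m-fold sequential composition F^m entails r' ≤ r + m·a modulo LIRR. -/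
open MvPolynomial

/-- A model of the theory `LIRR` over constant symbols `σ`: an `LRR`-model (a divisible
ordered commutative ring, i.e. a `ℚ`-algebra with a reflexive, transitive, antisymmetric,
addition-compatible, unperforated order with `0 ≤ 1 ∧ 0 ≠ 1`) together with an `Int`
predicate containing `1`, closed under addition and additive inverse, and satisfying the
cutting-plane axioms. -/
structure LIRRModel (σ : Type) where
  Carrier : Type
  [ring : CommRing Carrier]
  [alg : Algebra ℚ Carrier]
  le : Carrier → Carrier → Prop
  le_refl : ∀ x, le x x
  le_trans : ∀ x y z, le x y → le y z → le x z
  le_antisymm : ∀ x y, le x y → le y x → x = y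
  le_add : ∀ x y z, le x y → le (x + z) (y + z)
  le_zero_one : le 0 1
  zero_ne_one : (0 : Carrier) ≠ 1
  unperforated : ∀ (n : ℕ) (x : Carrier), 1 ≤ n → le 0 (n • x) → le 0 x
  intP : Carrier → Prop
  intP_one : intP 1
  intP_add : ∀ x y, intP x → intP y → intP (x + y)
  intP_neg : ∀ x y, intP x → x + y = 0 → intP y
  cutting_plane : ∀ (n m : ℤ) (x : Carrier), 0 < n → intP x →
    le 0 (n • x + (m : Carrier)) → le 0 (x + ((⌊(m : ℚ) / (n : ℚ)⌋ : ℤ) : Carrier))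

attribute [instance] LIRRModel.ring LIRRModel.alg

/-- Evaluation of a linear term `r ∈ ⟨ℚ⟩X` (a rational linear combination of the
variables) at a state `s`. -/
def evalLin {σ : Type} (M : LIRRModel σ) (r : σ →₀ ℚ) (s : σ → M.Carrier) : M.Carrier :=
  r.sum fun x c => c • s x

/-- Evaluation of a polynomial over `X` at a state `s`. -/
noncomputable def evalPoly {σ : Type} (M : LIRRModel σ) (a : MvPolynomial σ ℚ) (s : σ → M.Carrier) :
    M.Carrier :=
  MvPolynomial.aeval s a

/-- `m`-fold sequential composition of a transition relation: `relPow T 0` asserts that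
post-state equals pre-state, and `relPow T (n+1) s u = ∃ t, T s t ∧ relPow T n t u`
(the existential plays the role of `∃X''` in `F ∘ G`). -/
def relPow {α : Type} (T : α → α → Prop) : ℕ → α → α → Prop
  | 0 => Eq
  | n + 1 => fun s u => ∃ t, T s t ∧ relPow T n t u

/-- soundness of the transitive-closure summary for a single recurrence:
let `F` be a transition formula over `X ∪ X'` modulo `LIRR` — semantically, for each
`LIRR`-model `M` a relation `T M` between pre-states and post-states — let `r` be a
linear term over `X` and `a` a polynomial over `X` such that `F` entails both
`r' ≤ r + a` and `a' = a` modulo `LIRR`.  Then for every natural number `m`, the `m`-fold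
sequential composition `F^m` entails `r' ≤ r + m·a` modulo `LIRR`. -/
theorem soundness_of_single_recurrence {σ : Type} [Fintype σ]
    (T : (M : LIRRModel σ) → (σ → M.Carrier) → (σ → M.Carrier) → Prop)
    (r : σ →₀ ℚ) (a : MvPolynomial σ ℚ)
    (hrec : ∀ (M : LIRRModel σ) (s s' : σ → M.Carrier), T M s s' →
      M.le (evalLin M r s') (evalLin M r s + evalPoly M a s))
    (hinv : ∀ (M : LIRRModel σ) (s s' : σ → M.Carrier), T M s s' →
      evalPoly M a s' = evalPoly M a s) :
    ∀ (m : ℕ) (M : LIRRModel σ) (s s' : σ → M.Carrier), relPow (T M) m s s' →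
      M.le (evalLin M r s') (evalLin M r s + m • evalPoly M a s) := by
  intro m
  induction m with
  | zero =>
    intro M s s' h
    cases h
    simpa using M.le_refl (evalLin M r s)
  | succ n ih =>
    intro M s s' h
    obtain ⟨t, hst, hts'⟩ := h
    have h1 := ih M t s' hts'
    have h2 := hrec M s t hst
    have h3 := hinv M s t hst
    rw [h3] at h1
    have h4 := M.le_add _ _ (n • evalPoly M a s) h2
    refine M.le_trans _ _ _ h1 ?_
    have : evalLin M r s + evalPoly M a s + n • evalPoly M a s
        = evalLin M r s + (n + 1) • evalPoly M a s := by
      rw [add_smul, one_smul]; ring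
    rw [this] at h4
    exact h4
end
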